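/- arXiv:1203.0050 — 6 statements merged into one kernel-verified Lean document; each statement's English description precedes it below -/
import Mathlib

section
/- For every finite simple graph G = (V, E) with a nonnegative cost function c : V → ℝ, the Mafia Vertex Cover Game has a pure Nash equilibrium; that is, there exists a strategy profile (M, r) such that no single agent can strictly increase his utility by unilaterally changing his own strategy. -/
/-
A maximal fractional `c`-matching `y` (every edge has an endpoint whose load is its cost) exists
by greedily raising the weight of each edge until one endpoint is saturated. Let the saturated
vertices, a vertex cover, be the mafiosi, each demanding `y` from his neighbours. Then nobody is
asked more than his cost, so nobody is protected and every agent's utility is `-D(v)`. A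
deviation of `v` leaves `D(v)` unchanged, and in any valid profile an agent's utility is at most
`-min (D v) (c v)`, which here equals `-D(v)`.
-/

open Finset
open scoped Classical

namespace MafiaVC

variable {V : Type*} [Fintype V] [DecidableEq V]

noncomputable section

/-- The demand `D(v) = ∑_{u∈M} r(u,v)` asked from agent `v`. -/
def demand (M : Finset V) (r : V → V → ℝ) (v : V) : ℝ := ∑ u ∈ M, r u v

/-- A valid strategy profile of the Mafia Vertex Cover Game: ransoms are nonnegative,
`r u w = 0` unless `u` is a mafioso and `uw` is an edge, and every mafioso `u` distributes
exactly `c u` among his neighbors. -/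
def ValidProfile (G : SimpleGraph V) [DecidableRel G.Adj] (c : V → ℝ)
    (M : Finset V) (r : V → V → ℝ) : Prop :=
  (∀ u w, 0 ≤ r u w) ∧
  (∀ u w, u ∉ M ∨ ¬ G.Adj u w → r u w = 0) ∧
  (∀ u ∈ M, ∑ w ∈ G.neighborFinset u, r u w = c u)

/-- Utility of agent `v` in the Mafia Vertex Cover Game.  A mafioso gets
`-c v + F⁺(v) - F⁻(v)` where `F⁻(v) = min(D v, c v)` and protected mafiosi
(`u ∈ M` with `D u > c u`) pay only the fraction `c u / D u` of the demanded ransom.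
A civilian gets `-D v` minus the penalty `T` if he is incident to an uncovered edge. -/
def utility (G : SimpleGraph V) [DecidableRel G.Adj] (c : V → ℝ) (T : ℝ)
    (M : Finset V) (r : V → V → ℝ) (v : V) : ℝ :=
  if v ∈ M then
    -c v +
      (∑ u ∈ G.neighborFinset v,
        if u ∈ M ∧ c u < demand M r u then (c u / demand M r u) * r v u else r v u) -
      min (demand M r v) (c v)
  else
    -demand M r v - (if ∃ u ∈ G.neighborFinset v, u ∉ M then T else 0)

/-- `(M', r')` is a unilateral deviation of agent `v` from `(M, r)`:
all other agents keep their strategies. -/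
def Deviation (v : V) (M M' : Finset V) (r r' : V → V → ℝ) : Prop :=
  (∀ u, u ≠ v → (u ∈ M' ↔ u ∈ M)) ∧ ∀ u w, u ≠ v → r' u w = r u w

/-- `(M, r)` is a pure Nash equilibrium: it is a valid profile and no agent can strictly
increase his utility by a unilateral deviation. -/
def IsNashEq (G : SimpleGraph V) [DecidableRel G.Adj] (c : V → ℝ) (T : ℝ)
    (M : Finset V) (r : V → V → ℝ) : Prop :=
  ValidProfile G c M r ∧
  ∀ (v : V) (M' : Finset V) (r' : V → V → ℝ),
    ValidProfile G c M' r' → Deviation v M M' r r' →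
      utility G c T M' r' v ≤ utility G c T M r v

def load (y : V → V → ℝ) (v : V) : ℝ := ∑ w, y v w

structure IsFractionalMatching (G : SimpleGraph V) (c : V → ℝ) (y : V → V → ℝ) : Prop where
  nonneg : ∀ u w, 0 ≤ y u w
  symm : ∀ u w, y u w = y w u
  eq_zero_of_not_adj : ∀ u w, ¬ G.Adj u w → y u w = 0
  load_le : ∀ v, load y v ≤ c v

section FractionalMatching

variable {G : SimpleGraph V} {c : V → ℝ} {y : V → V → ℝ}

def raise (y : V → V → ℝ) (u w : V) (δ : ℝ) : V → V → ℝ :=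
  fun a b => y a b + (if a = u ∧ b = w then δ else 0) + (if a = w ∧ b = u then δ else 0)

lemma load_raise (u w : V) (δ : ℝ) (v : V) :
    load (raise y u w δ) v = load y v + (if v = u then δ else 0) + (if v = w then δ else 0) := by
  simp [load, raise, Finset.sum_add_distrib, ite_and]

def saturateEdge (c : V → ℝ) (y : V → V → ℝ) (u w : V) : V → V → ℝ :=
  raise y u w (min (c u - load y u) (c w - load y w))

lemma isFractionalMatching_saturateEdge (hy : IsFractionalMatching G c y) {u w : V} (huw : G.Adj u w) :
    IsFractionalMatching G c (saturateEdge c y u w) := by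
  unfold saturateEdge
  set δ := min (c u - load y u) (c w - load y w)
  have hδu : δ ≤ c u - load y u := min_le_left _ _
  have hδw : δ ≤ c w - load y w := min_le_right _ _
  have hδ : 0 ≤ δ := le_min (by linarith [hy.load_le u]) (by linarith [hy.load_le w])
  refine ⟨fun a b => ?_, fun a b => ?_, fun a b hab => ?_, fun v => ?_⟩
  · have := hy.nonneg a b
    unfold raise
    split_ifs <;> linarith
  · simp only [raise, hy.symm a b]
    split_ifs <;> grind
  · have hne : ¬ ((a = u ∧ b = w) ∨ (a = w ∧ b = u)) := by
      rintro (⟨rfl, rfl⟩ | ⟨rfl, rfl⟩)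
      exacts [hab huw, hab huw.symm]
    simp only [raise, hy.eq_zero_of_not_adj a b hab]
    split_ifs <;> grind
  · rw [load_raise]
    have := hy.load_le v
    split_ifs with hu hw
    · exact absurd (hu.symm.trans hw) huw.ne
    all_goals subst_vars; linarith

lemma load_le_load_saturateEdge (hy : IsFractionalMatching G c y) (u w v : V) :
    load y v ≤ load (saturateEdge c y u w) v := by
  have hδ : 0 ≤ min (c u - load y u) (c w - load y w) :=
    le_min (by linarith [hy.load_le u]) (by linarith [hy.load_le w])
  rw [saturateEdge, load_raise]
  split_ifs <;> linarith

lemma load_saturateEdge_eq_or {u w : V} (huw : u ≠ w) :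
    load (saturateEdge c y u w) u = c u ∨ load (saturateEdge c y u w) w = c w := by
  simp only [saturateEdge, load_raise, if_neg huw, if_neg huw.symm, if_true]
  rcases min_choice (c u - load y u) (c w - load y w) with h | h <;> rw [h]
  exacts [Or.inl (by ring), Or.inr (by ring)]

lemma exists_isFractionalMatching_saturating (hc : ∀ v, 0 ≤ c v) (S : Finset (V × V))
    (hS : ∀ p ∈ S, G.Adj p.1 p.2) :
    ∃ y, IsFractionalMatching G c y ∧ ∀ p ∈ S, load y p.1 = c p.1 ∨ load y p.2 = c p.2 := by
  induction S using Finset.induction_on with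
  | empty =>
    exact ⟨0, ⟨fun _ _ => le_rfl, fun _ _ => rfl, fun _ _ _ => rfl, by simpa [load] using hc⟩,
      by simp⟩
  | @insert e S _ ih =>
    obtain ⟨u, w⟩ := e
    have huw : G.Adj u w := hS _ (Finset.mem_insert_self _ _)
    obtain ⟨y, hy, hsat⟩ := ih fun p hp => hS p (Finset.mem_insert_of_mem hp)
    have hy' := isFractionalMatching_saturateEdge hy huw
    have hmono := load_le_load_saturateEdge hy u w
    refine ⟨_, hy', fun p hp => ?_⟩
    rcases Finset.mem_insert.mp hp with rfl | hp
    · exact load_saturateEdge_eq_or huw.ne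
    · rcases hsat p hp with h | h
      · exact Or.inl (le_antisymm (hy'.load_le _) (h ▸ hmono _))
      · exact Or.inr (le_antisymm (hy'.load_le _) (h ▸ hmono _))

lemma exists_isFractionalMatching_maximal [DecidableRel G.Adj] (hc : ∀ v, 0 ≤ c v) :
    ∃ y, IsFractionalMatching G c y ∧
      ∀ u w, G.Adj u w → load y u = c u ∨ load y w = c w := by
  obtain ⟨y, hy, hsat⟩ := exists_isFractionalMatching_saturating hc
    (Finset.univ.filter fun p : V × V => G.Adj p.1 p.2) fun _ hp => (Finset.mem_filter.mp hp).2
  exact ⟨y, hy, fun u w huw => hsat (u, w) (by simpa using huw)⟩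

end FractionalMatching

section Equilibrium

variable {G : SimpleGraph V} [DecidableRel G.Adj] {c : V → ℝ} {T : ℝ} {M M' : Finset V}
  {r r' : V → V → ℝ}

lemma utility_le_neg_min (hc : ∀ v, 0 ≤ c v) (hT : 0 ≤ T) (h : ValidProfile G c M r) (v : V) :
    utility G c T M r v ≤ -min (demand M r v) (c v) := by
  unfold utility
  split_ifs with hv hpen
  · have hF : (∑ u ∈ G.neighborFinset v,
        if u ∈ M ∧ c u < demand M r u then (c u / demand M r u) * r v u else r v u) ≤ c v := by
      rw [← h.2.2 v hv]
      refine Finset.sum_le_sum fun u _ => ?_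
      split_ifs with hu
      · have hD : 0 < demand M r u := (hc u).trans_lt hu.2
        exact mul_le_of_le_one_left (h.1 v u) ((div_le_one hD).2 hu.2.le)
      · exact le_rfl
    linarith
  all_goals linarith [min_le_left (demand M r v) (c v)]

lemma demand_eq_of_deviation {v : V} (h : ValidProfile G c M r) (h' : ValidProfile G c M' r')
    (hdev : Deviation v M M' r r') : demand M' r' v = demand M r v := by
  unfold demand
  rw [← Finset.sum_erase M' (f := (r' · v)) (h'.2.1 v v (Or.inr G.irrefl)),
    ← Finset.sum_erase M (f := (r · v)) (h.2.1 v v (Or.inr G.irrefl))]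
  have hM : M'.erase v = M.erase v := by
    ext u
    simp only [Finset.mem_erase]
    exact and_congr_right (hdev.1 u)
  rw [hM]
  exact Finset.sum_congr rfl fun u hu => hdev.2 u v (Finset.mem_erase.mp hu).1

lemma utility_eq_neg_demand (h : ValidProfile G c M r) (hM : G.IsVertexCover ↑M)
    (hD : ∀ v, demand M r v ≤ c v) (v : V) : utility G c T M r v = -demand M r v := by
  unfold utility
  split_ifs with hv hpen
  · have hF : (∑ u ∈ G.neighborFinset v,
        if u ∈ M ∧ c u < demand M r u then (c u / demand M r u) * r v u else r v u) = c v := by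
      rw [← h.2.2 v hv]
      exact Finset.sum_congr rfl fun u _ => if_neg fun hu => (hD u).not_gt hu.2
    rw [hF, min_eq_left (hD v)]
    ring
  · obtain ⟨u, hu, huM⟩ := hpen
    exact (huM ((hM ((G.mem_neighborFinset v u).mp hu)).resolve_left hv)).elim
  · ring

lemma isNashEq_of_isVertexCover (hc : ∀ v, 0 ≤ c v) (hT : 0 ≤ T) (h : ValidProfile G c M r)
    (hM : G.IsVertexCover ↑M) (hD : ∀ v, demand M r v ≤ c v) : IsNashEq G c T M r := by
  refine ⟨h, fun v M' r' h' hdev => ?_⟩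
  calc utility G c T M' r' v ≤ -min (demand M' r' v) (c v) := utility_le_neg_min hc hT h' v
    _ = -demand M r v := by rw [demand_eq_of_deviation h h' hdev, min_eq_left (hD v)]
    _ = utility G c T M r v := (utility_eq_neg_demand h hM hD v).symm

end Equilibrium

def ransom (M : Finset V) (y : V → V → ℝ) : V → V → ℝ :=
  fun u w => if u ∈ M then y u w else 0

section Ransom

variable {G : SimpleGraph V} {c : V → ℝ} {M : Finset V} {y : V → V → ℝ}

lemma validProfile_ransom [DecidableRel G.Adj] (hy : IsFractionalMatching G c y)
    (hM : ∀ u ∈ M, load y u = c u) :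
    ValidProfile G c M (ransom M y) := by
  refine ⟨fun u w => ?_, fun u w huw => ?_, fun u hu => ?_⟩
  · unfold ransom
    split_ifs
    exacts [hy.nonneg u w, le_rfl]
  · unfold ransom
    split_ifs with hu
    exacts [hy.eq_zero_of_not_adj u w (huw.resolve_left (not_not.mpr hu)), rfl]
  · rw [← hM u hu, load, ← Finset.sum_subset (Finset.subset_univ (G.neighborFinset u))
      fun w _ hw => hy.eq_zero_of_not_adj u w (by simpa using hw)]
    exact Finset.sum_congr rfl fun w _ => if_pos hu

lemma demand_ransom_le (hy : IsFractionalMatching G c y) (v : V) :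
    demand M (ransom M y) v ≤ c v :=
  calc demand M (ransom M y) v = ∑ u ∈ M, y u v :=
        Finset.sum_congr rfl fun _ hu => if_pos hu
    _ ≤ ∑ u, y u v :=
        Finset.sum_le_sum_of_subset_of_nonneg (Finset.subset_univ M) fun u _ _ => hy.nonneg u v
    _ = load y v := Finset.sum_congr rfl fun u _ => hy.symm u v
    _ ≤ c v := hy.load_le v

end Ransom

/-- the Mafia Vertex Cover Game always has a pure Nash equilibrium. -/
theorem stmt_3 (G : SimpleGraph V) [DecidableRel G.Adj] (c : V → ℝ)
    (hc : ∀ v, 0 ≤ c v) (T : ℝ) (hT : 2 * ∑ v, c v < T) :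
    ∃ (M : Finset V) (r : V → V → ℝ), IsNashEq G c T M r := by
  obtain ⟨y, hy, hsat⟩ := exists_isFractionalMatching_maximal (G := G) hc
  have hT0 : 0 ≤ T := by linarith [Finset.sum_nonneg fun v (_ : v ∈ Finset.univ) => hc v]
  set M := Finset.univ.filter fun v => load y v = c v
  refine ⟨M, ransom M y, isNashEq_of_isVertexCover hc hT0 ?_ ?_ (demand_ransom_le hy)⟩
  · exact validProfile_ransom hy fun u hu => (Finset.mem_filter.mp hu).2
  · intro u w huw
    simpa [M] using hsat u w huw

end
end MafiaVC
end

section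
/- Let the strategy profile (M, r) of the Mafia Vertex Cover Game be a pure Nash equilibrium. Then M is a vertex cover of G: every edge of E has at least one endpoint in M. -/
/-!
If an edge `uw` had two civilian endpoints, `u` would pay the penalty `T`. Becoming a mafioso
instead and demanding his whole cost `c u` from `w` costs him at most `c u + min (D u) (c u)`,
i.e. at most `2 c u < T`, so the profile cannot be an equilibrium.
-/

open Finset
open scoped Classical

namespace MafiaVC

variable {V : Type*} [Fintype V] [DecidableEq V]

noncomputable section

section

variable {G : SimpleGraph V} [DecidableRel G.Adj] {c : V → ℝ} {M : Finset V} {r : V → V → ℝ}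

omit [DecidableEq V] in
lemma ValidProfile.demand_nonneg (h : ValidProfile G c M r) (v : V) : 0 ≤ demand M r v :=
  Finset.sum_nonneg fun u _ => h.1 u v

lemma ValidProfile.insert_update_single (h : ValidProfile G c M r) {u w : V}
    (hcu : 0 ≤ c u) (huw : G.Adj u w) :
    ValidProfile G c (insert u M) (Function.update r u (Pi.single w (c u))) := by
  obtain ⟨hnonneg, hsupp, hsum⟩ := h
  refine ⟨fun a b => ?_, fun a b hab => ?_, fun a ha => ?_⟩
  · rcases eq_or_ne a u with rfl | hau
    · rcases eq_or_ne b w with rfl | hbw <;> simp [*]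
    · simpa [hau] using hnonneg a b
  · rcases eq_or_ne a u with rfl | hau
    · rcases eq_or_ne b w with rfl | hbw
      · simp [huw] at hab
      · simp [hbw]
    · simpa [hau] using hsupp a b (hab.imp_left fun haM => by simp_all)
  · rcases eq_or_ne a u with rfl | hau
    · simp [Finset.sum_pi_single', huw]
    · simpa [hau] using hsum a (by simpa [hau] using ha)

omit [Fintype V] in
lemma deviation_insert_update (u : V) (M : Finset V) (r : V → V → ℝ) (f : V → ℝ) :
    Deviation u M (insert u M) r (Function.update r u f) :=
  ⟨fun a hau => by simp [hau], fun a b hau => by simp [hau]⟩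

lemma ValidProfile.neg_two_mul_le_utility (h : ValidProfile G c M r) (hc : ∀ v, 0 ≤ c v)
    (T : ℝ) {v : V} (hv : v ∈ M) : -2 * c v ≤ utility G c T M r v := by
  have hgain : 0 ≤ ∑ u ∈ G.neighborFinset v,
      if u ∈ M ∧ c u < demand M r u then (c u / demand M r u) * r v u else r v u :=
    Finset.sum_nonneg fun u _ => by
      split_ifs
      · exact mul_nonneg (div_nonneg (hc u) (h.demand_nonneg u)) (h.1 v u)
      · exact h.1 v u
  rw [utility, if_pos hv]
  linarith [min_le_right (demand M r v) (c v)]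

lemma ValidProfile.utility_le_neg_of_adj (h : ValidProfile G c M r) (T : ℝ) {u w : V}
    (huw : G.Adj u w) (hu : u ∉ M) (hw : w ∉ M) : utility G c T M r u ≤ -T := by
  rw [utility, if_neg hu, if_pos ⟨w, (G.mem_neighborFinset u w).mpr huw, hw⟩]
  linarith [h.demand_nonneg u]

end

/-- in any pure Nash equilibrium `(M, r)` of the Mafia Vertex Cover Game,
the Mafia `M` is a vertex cover. -/
theorem stmt_4 (G : SimpleGraph V) [DecidableRel G.Adj] (c : V → ℝ)
    (hc : ∀ v, 0 ≤ c v) (T : ℝ) (hT : 2 * ∑ v, c v < T)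
    (M : Finset V) (r : V → V → ℝ)
    (hnash : IsNashEq G c T M r) :
    ∀ ⦃u w : V⦄, G.Adj u w → u ∈ M ∨ w ∈ M := by
  intro u w huw
  by_contra! h
  obtain ⟨hvalid, hstable⟩ := hnash
  have hvalid' := hvalid.insert_update_single (hc u) huw
  have hdeviate := hstable u _ _ hvalid' (deviation_insert_update u M r _)
  have hafter := hvalid'.neg_two_mul_le_utility hc T (Finset.mem_insert_self u M)
  have hbefore := hvalid.utility_le_neg_of_adj T huw h.1 h.2
  have hcu : c u ≤ ∑ v, c v := Finset.single_le_sum (fun v _ => hc v) (Finset.mem_univ u)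
  linarith

end
end MafiaVC
end

section
/- Let the strategy profile (M, r) of the Mafia Vertex Cover Game be a pure Nash equilibrium. Then M is a vertex cover of G and ∑_{v∈M} c(v) ≤ 2·∑_{v∈M*} c(v) for every vertex cover M* of G; that is, the price of anarchy of the Mafia Vertex Cover Game is at most 2. -/
/-!
In an equilibrium every agent with a neighbor can guarantee himself `-2 c(v)` by turning mafioso
and demanding his whole cost from one neighbor. As the penalty `T` exceeds this, no edge is left
uncovered, and no civilian is asked for more than `2 c(v)`. No mafioso is protected: one who
pays a protected mafioso collects less than his cost, so he would rather redirect his ransom to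
a civilian neighbor or turn civilian, unless he is protected himself; the protected mafiosi
would then be paid only by each other, which their total cost cannot sustain. Now each mafioso
outside a vertex cover `M*` pays his cost to `M*`, and a vertex of `M*` is asked for at most
`2 c(v)`, less its own cost if it is a mafioso; summing gives `c(M) ≤ 2 c(M*)`.
-/

open Finset
open scoped Classical

namespace MafiaVC

variable {V : Type*} [Fintype V] [DecidableEq V]

noncomputable section

/-- The paper's `F⁺(v)`. -/
def income (G : SimpleGraph V) [DecidableRel G.Adj] (c : V → ℝ) (M : Finset V)
    (r : V → V → ℝ) (v : V) : ℝ :=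
  ∑ u ∈ G.neighborFinset v,
    if u ∈ M ∧ c u < demand M r u then (c u / demand M r u) * r v u else r v u

section Profile

variable {G : SimpleGraph V} [DecidableRel G.Adj] {c : V → ℝ} {T : ℝ} {M M' : Finset V}
  {r : V → V → ℝ} {u v w : V}

lemma utility_of_mem (hv : v ∈ M) :
    utility G c T M r v = -c v + income G c M r v - min (demand M r v) (c v) := by
  simp only [utility, income, if_pos hv]

lemma utility_of_notMem (hv : v ∉ M) :
    utility G c T M r v =
      -demand M r v - if ∃ u ∈ G.neighborFinset v, u ∉ M then T else 0 := by
  simp only [utility, if_neg hv]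

omit [Fintype V] [DecidableEq V] in
lemma demand_nonneg (hr : ∀ u w, 0 ≤ r u w) (v : V) : 0 ≤ demand M r v :=
  sum_nonneg fun u _ => hr u v

omit [Fintype V] in
lemma demand_update_self {f : V → ℝ} (hM : M'.erase v = M.erase v) (hf : f v = 0)
    (hr : r v v = 0) : demand M' (Function.update r v f) v = demand M r v := by
  unfold demand
  rw [← sum_erase M' (f := fun y => Function.update r v f y v) (a := v) (by simpa using hf),
    ← sum_erase M (f := fun y => r y v) hr, hM]
  exact sum_congr rfl fun y hy => by rw [Function.update_of_ne (ne_of_mem_erase hy)]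

lemma income_nonneg (hc : ∀ v, 0 ≤ c v) (hr : ∀ u w, 0 ≤ r u w) (v : V) :
    0 ≤ income G c M r v := by
  refine sum_nonneg fun u _ => ?_
  split
  · exact mul_nonneg (div_nonneg (hc u) (demand_nonneg hr u)) (hr v u)
  · exact hr v u

omit [Fintype V] [DecidableEq V] in
lemma protected_share_le (hc : ∀ v, 0 ≤ c v) (hr : ∀ u w, 0 ≤ r u w)
    (hu : c u < demand M r u) : (c u / demand M r u) * r v u ≤ r v u :=
  mul_le_of_le_one_left (hr v u) ((div_le_one ((hc u).trans_lt hu)).2 hu.le)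

lemma income_lt (hc : ∀ v, 0 ≤ c v) (hr : ∀ u w, 0 ≤ r u w) (huv : G.Adj v u) (hu : u ∈ M)
    (hprot : c u < demand M r u) (hpay : 0 < r v u) :
    income G c M r v < ∑ u ∈ G.neighborFinset v, r v u := by
  refine sum_lt_sum (fun x _ => ?_) ⟨u, (G.mem_neighborFinset v u).2 huv, ?_⟩
  · split_ifs with hprot
    · exact protected_share_le hc hr hprot.2
    · exact le_rfl
  · rw [if_pos ⟨hu, hprot⟩]
    exact mul_lt_of_lt_one_left hpay ((div_lt_one ((hc u).trans_lt hprot)).2 hprot)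

lemma income_eq_of_unprotected
    (h : ∀ u ∈ G.neighborFinset v, r v u ≠ 0 → ¬(u ∈ M ∧ c u < demand M r u)) :
    income G c M r v = ∑ u ∈ G.neighborFinset v, r v u := by
  refine sum_congr rfl fun u hu => ?_
  by_cases hpay : r v u = 0
  · simp [hpay]
  · rw [if_neg (h u hu hpay)]

omit [Fintype V] in
lemma deviation_update (hM : ∀ u, u ≠ v → (u ∈ M' ↔ u ∈ M)) (f : V → ℝ) :
    Deviation v M M' r (Function.update r v f) :=
  ⟨hM, fun _ _ hu => by rw [Function.update_of_ne hu]⟩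

namespace ValidProfile

variable (hval : ValidProfile G c M r)
include hval

omit [DecidableEq V] in
lemma ransom_self (v : V) : r v v = 0 :=
  hval.2.1 v v (Or.inr (G.loopless.irrefl v))

omit [DecidableEq V] in
lemma sum_ransom_of_subset {S : Finset V} (hu : u ∈ M) (hS : G.neighborFinset u ⊆ S) :
    ∑ w ∈ S, r u w = c u := by
  rw [← hval.2.2 u hu]
  exact (sum_subset hS fun w _ hw =>
    hval.2.1 u w (Or.inr fun h => hw ((G.mem_neighborFinset u w).2 h))).symm

omit [DecidableEq V] in
lemma sum_ransom_le (hu : u ∈ M) (S : Finset V) : ∑ w ∈ S, r u w ≤ c u :=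
  calc ∑ w ∈ S, r u w ≤ ∑ w, r u w :=
        sum_le_sum_of_subset_of_nonneg (subset_univ S) fun w _ _ => hval.1 u w
    _ = c u := hval.sum_ransom_of_subset hu (subset_univ _)

lemma insert_update_single_s7 (hcu : 0 ≤ c u) (huw : G.Adj u w) :
    ValidProfile G c (insert u M) (Function.update r u (Pi.single w (c u))) := by
  refine ⟨fun a b => ?_, fun a b hab => ?_, fun a ha => ?_⟩
  · rcases eq_or_ne a u with rfl | ha
    · rw [Function.update_self, Pi.single_apply]
      split <;> simp [hcu]
    · rw [Function.update_of_ne ha]; exact hval.1 a b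
  · rcases eq_or_ne a u with rfl | ha
    · have hb : b ≠ w := by
        rintro rfl
        exact hab.elim (· (mem_insert_self a M)) (· huw)
      rw [Function.update_self, Pi.single_eq_of_ne hb]
    · rw [Function.update_of_ne ha]
      exact hval.2.1 a b (hab.imp_left fun h hm => h (mem_insert_of_mem hm))
  · rcases eq_or_ne a u with rfl | hau
    · simp [(G.mem_neighborFinset a w).2 huw]
    · simp only [Function.update_of_ne hau]
      exact hval.2.2 a ((mem_insert.1 ha).resolve_left hau)

lemma erase_update_zero (u : V) : ValidProfile G c (M.erase u) (Function.update r u 0) := by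
  refine ⟨fun a b => ?_, fun a b hab => ?_, fun a ha => ?_⟩
  · rcases eq_or_ne a u with rfl | ha
    · simp
    · rw [Function.update_of_ne ha]; exact hval.1 a b
  · rcases eq_or_ne a u with rfl | ha
    · simp
    · rw [Function.update_of_ne ha]
      exact hval.2.1 a b (hab.imp_left fun h hm => h (mem_erase.2 ⟨ha, hm⟩))
  · obtain ⟨hau, haM⟩ := mem_erase.1 ha
    simp only [Function.update_of_ne hau]
    exact hval.2.2 a haM

omit [DecidableEq V] in
lemma sum_demand_le {S : Finset V} (hSM : S ⊆ M)
    (hS : ∀ w ∈ M, ∀ u ∈ S, 0 < r w u → w ∈ S) :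
    ∑ u ∈ S, demand M r u ≤ ∑ w ∈ S, c w :=
  calc ∑ u ∈ S, demand M r u = ∑ w ∈ M, ∑ u ∈ S, r w u := sum_comm
    _ = ∑ w ∈ S, ∑ u ∈ S, r w u := by
        refine (sum_subset hSM fun w hwM hwS => sum_eq_zero fun u hu => ?_).symm
        by_contra hpay
        exact hwS (hS w hwM u hu ((hval.1 w u).lt_of_ne' hpay))
    _ ≤ ∑ w ∈ S, c w := sum_le_sum fun w hw => hval.sum_ransom_le (hSM hw) S

lemma sum_cost_le_two_mul {Mstar : Finset V} (hcover : G.IsVertexCover ↑Mstar)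
    (hmaf : ∀ u ∈ M, demand M r u ≤ c u) (hciv : ∀ u ∉ M, demand M r u ≤ 2 * c u) :
    ∑ v ∈ M, c v ≤ 2 * ∑ v ∈ Mstar, c v := by
  have hout : ∑ v ∈ M \ Mstar, c v ≤ ∑ u ∈ Mstar, demand M r u :=
    calc ∑ v ∈ M \ Mstar, c v = ∑ v ∈ M \ Mstar, ∑ u ∈ Mstar, r v u := by
          refine sum_congr rfl fun v hv => (hval.sum_ransom_of_subset (mem_sdiff.1 hv).1 ?_).symm
          intro u hu
          exact (hcover ((G.mem_neighborFinset v u).1 hu)).resolve_left (mem_sdiff.1 hv).2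
      _ = ∑ u ∈ Mstar, ∑ v ∈ M \ Mstar, r v u := sum_comm
      _ ≤ ∑ u ∈ Mstar, demand M r u :=
          sum_le_sum fun u _ => sum_le_sum_of_subset_of_nonneg sdiff_subset fun v _ _ => hval.1 v u
  have hshare : ∀ u, demand M r u + (if u ∈ M then c u else 0) ≤ 2 * c u := by
    intro u
    split_ifs with hu
    · linarith [hmaf u hu]
    · linarith [hciv u hu]
  calc ∑ v ∈ M, c v = ∑ v ∈ Mstar ∩ M, c v + ∑ v ∈ M \ Mstar, c v := by
        rw [inter_comm, sum_inter_add_sum_sdiff]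
    _ ≤ ∑ u ∈ Mstar, (demand M r u + if u ∈ M then c u else 0) := by
        rw [sum_add_distrib, ← sum_ite_mem]
        linarith
    _ ≤ ∑ u ∈ Mstar, 2 * c u := sum_le_sum fun u _ => hshare u
    _ = 2 * ∑ u ∈ Mstar, c u := (mul_sum ..).symm

end ValidProfile

namespace IsNashEq

variable (hnash : IsNashEq G c T M r) (hc : ∀ v, 0 ≤ c v)
include hnash hc

lemma neg_two_mul_le_utility (huw : G.Adj u w) : -(2 * c u) ≤ utility G c T M r u := by
  have hval' := hnash.1.insert_update_single_s7 (hc u) huw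
  refine le_trans ?_ (hnash.2 u _ _ hval' (deviation_update (fun a ha => ?_) _))
  · rw [utility_of_mem (mem_insert_self u M)]
    linarith [income_nonneg (G := G) hc hval'.1 (M := insert u M) u,
      min_le_right (demand (insert u M) (Function.update r u (Pi.single w (c u))) u) (c u)]
  · simp [ha]

lemma isVertexCover (hT : 2 * ∑ v, c v < T) : G.IsVertexCover ↑M := by
  intro u w huw
  by_contra! h
  have hle := hnash.neg_two_mul_le_utility hc huw
  rw [utility_of_notMem h.1, if_pos ⟨w, (G.mem_neighborFinset u w).2 huw, h.2⟩] at hle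
  linarith [demand_nonneg hnash.1.1 (M := M) u, single_le_sum (fun v _ => hc v) (mem_univ u)]

lemma demand_le_two_mul (hT : 2 * ∑ v, c v < T) (hu : u ∉ M) : demand M r u ≤ 2 * c u := by
  by_cases hnbr : ∃ w, G.Adj u w
  · obtain ⟨w, huw⟩ := hnbr
    have hle := hnash.neg_two_mul_le_utility hc huw
    have hcover := hnash.isVertexCover hc hT
    rw [utility_of_notMem hu, if_neg fun ⟨x, hx, hxM⟩ =>
      (hcover ((G.mem_neighborFinset u x).1 hx)).elim hu hxM] at hle
    linarith
  · push Not at hnbr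
    have hzero : demand M r u = 0 :=
      sum_eq_zero fun w _ => hnash.1.2.1 w u (Or.inr fun h => hnbr w h.symm)
    linarith [hc u]

lemma protected_of_pays_protected (hw : w ∈ M) (hu : u ∈ M) (hprot : c u < demand M r u)
    (hpay : 0 < r w u) : c w < demand M r w := by
  obtain ⟨hval, hbest⟩ := hnash
  have hwu : G.Adj w u := by
    by_contra h
    exact hpay.ne' (hval.2.1 w u (Or.inr h))
  have hlt : income G c M r w < c w :=
    hval.2.2 w hw ▸ income_lt hc hval.1 hwu hu hprot hpay
  by_cases hciv : ∃ x ∈ G.neighborFinset w, x ∉ M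
  · exfalso
    obtain ⟨x, hx, hxM⟩ := hciv
    have hwx := (G.mem_neighborFinset w x).1 hx
    have hval' := hval.insert_update_single_s7 (hc w) hwx
    rw [insert_eq_of_mem hw] at hval'
    have hle := hbest w M _ hval' (deviation_update (fun _ _ => Iff.rfl) _)
    have hincome : income G c M (Function.update r w (Pi.single x (c w))) w = c w := by
      rw [income_eq_of_unprotected, hval'.2.2 w hw]
      intro y _ hy
      rw [Function.update_self, Pi.single_apply] at hy
      rw [show y = x by by_contra h; simp [h] at hy]
      exact fun h => hxM h.1
    rw [utility_of_mem hw, utility_of_mem hw, hincome,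
      demand_update_self rfl (Pi.single_eq_of_ne hwx.ne (c w)) (hval.ransom_self w)] at hle
    linarith
  · push Not at hciv
    by_contra! hle
    have hbetter := hbest w _ _ (hval.erase_update_zero w)
      (deviation_update (fun a ha => by simp [ha]) _)
    rw [utility_of_notMem (notMem_erase w M), if_neg fun ⟨x, hx, hxM⟩ =>
        hxM (mem_erase.2 ⟨((G.mem_neighborFinset w x).1 hx).ne.symm, hciv x hx⟩),
      demand_update_self (f := 0) erase_idem rfl (hval.ransom_self w), utility_of_mem hw,
      min_eq_left hle] at hbetter
    linarith

lemma demand_le (hu : u ∈ M) : demand M r u ≤ c u := by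
  by_contra! hprot
  set P := M.filter fun x => c x < demand M r x
  have hclosed := hnash.1.sum_demand_le (filter_subset _ M) fun w hw x hx hpay =>
    mem_filter.2 ⟨hw, hnash.protected_of_pays_protected hc hw (mem_filter.1 hx).1
      (mem_filter.1 hx).2 hpay⟩
  have hstrict : ∑ x ∈ P, c x < ∑ x ∈ P, demand M r x :=
    sum_lt_sum_of_nonempty ⟨u, mem_filter.2 ⟨hu, hprot⟩⟩ fun x hx => (mem_filter.1 hx).2
  linarith

end IsNashEq

end Profile

/-- in any pure Nash equilibrium `(M, r)` of the Mafia Vertex Cover Game,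
`M` is a vertex cover and its cost is at most twice the cost of any vertex cover
(price of anarchy at most 2). -/
theorem stmt_7 (G : SimpleGraph V) [DecidableRel G.Adj] (c : V → ℝ)
    (hc : ∀ v, 0 ≤ c v) (T : ℝ) (hT : 2 * ∑ v, c v < T)
    (M : Finset V) (r : V → V → ℝ)
    (hnash : IsNashEq G c T M r) :
    (∀ ⦃u w : V⦄, G.Adj u w → u ∈ M ∨ w ∈ M) ∧
      ∀ Mstar : Finset V, (∀ ⦃u w : V⦄, G.Adj u w → u ∈ Mstar ∨ w ∈ Mstar) →
        ∑ v ∈ M, c v ≤ 2 * ∑ v ∈ Mstar, c v :=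
  ⟨hnash.isVertexCover hc hT, fun _ hMstar =>
    hnash.1.sum_cost_le_two_mul hMstar (fun _ => hnash.demand_le hc)
      (fun _ => hnash.demand_le_two_mul hc hT)⟩

end
end MafiaVC
end

section
/- For every finite d-uniform hypergraph (V, 𝓔) (every hyperedge has exactly d elements, d ≥ 2) with a nonnegative cost function c : V → ℝ, there exists a complementary pair (M, y); that is, there exist a hitting set M and a feasible dual solution y such that every v ∈ M is tight for y. -/
/-!
Local ratio / primal–dual: pick a hyperedge `S` and a vertex `v₀ ∈ S` of least cost, raise the
dual variable of `S` to `c v₀`, and subtract `c v₀` from the cost of every vertex of `S`. The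
residual costs stay nonnegative and `v₀` now has residual cost `0`, so a complementary pair for
the remaining hyperedges and residual costs extends by `v₀` and the new dual value to one for
all hyperedges.
-/

open Finset

section

variable {V : Type*} [DecidableEq V]

def dualLoad (E : Finset (Finset V)) (y : Finset V → ℝ) (v : V) : ℝ :=
  ∑ S ∈ E.filter (fun S => v ∈ S), y S

structure IsComplementaryPair (E : Finset (Finset V)) (c : V → ℝ) (M : Finset V)
    (y : Finset V → ℝ) : Prop where
  hits : ∀ S ∈ E, (M ∩ S).Nonempty
  nonneg : ∀ S, 0 ≤ y S
  feasible : ∀ v, dualLoad E y v ≤ c v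
  tight : ∀ v ∈ M, dualLoad E y v = c v

lemma dualLoad_nonneg {E : Finset (Finset V)} {y : Finset V → ℝ} (hy : ∀ S, 0 ≤ y S) (v : V) :
    0 ≤ dualLoad E y v :=
  sum_nonneg fun S _ => hy S

lemma dualLoad_insert_update {E : Finset (Finset V)} {S : Finset V} (hS : S ∉ E)
    (y : Finset V → ℝ) (t : ℝ) (v : V) :
    dualLoad (insert S E) (Function.update y S t) v = dualLoad E y v + if v ∈ S then t else 0 := by
  have hE : ∑ T ∈ E.filter (fun T => v ∈ T), Function.update y S t T =
      ∑ T ∈ E.filter (fun T => v ∈ T), y T :=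
    sum_congr rfl fun T hT => Function.update_of_ne (ne_of_mem_of_not_mem (mem_filter.1 hT).1 hS) _ _
  unfold dualLoad
  rw [filter_insert]
  split_ifs with hv
  · rw [sum_insert (fun h => hS (mem_filter.1 h).1), Function.update_self, hE, add_comm]
  · rw [hE, add_zero]

lemma IsComplementaryPair.insert {E : Finset (Finset V)} {S : Finset V} (hS : S ∉ E)
    {c : V → ℝ} {v₀ : V} (hv₀ : v₀ ∈ S) (hv₀c : 0 ≤ c v₀) {M : Finset V} {y : Finset V → ℝ}
    (h : IsComplementaryPair E (fun v => c v - if v ∈ S then c v₀ else 0) M y) :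
    IsComplementaryPair (insert S E) c (insert v₀ M) (Function.update y S (c v₀)) where
  hits T hT := by
    rcases mem_insert.1 hT with rfl | hT
    · exact ⟨v₀, mem_inter.2 ⟨mem_insert_self _ _, hv₀⟩⟩
    · exact (h.hits T hT).mono (inter_subset_inter_right (subset_insert _ _))
  nonneg T := by
    rcases eq_or_ne T S with rfl | hT
    · simpa using hv₀c
    · simpa [hT] using h.nonneg T
  feasible v := by
    rw [dualLoad_insert_update hS]
    linarith [h.feasible v]
  tight v hv := by
    rw [dualLoad_insert_update hS]
    rcases mem_insert.1 hv with rfl | hv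
    · have hzero : dualLoad E y v = 0 :=
        le_antisymm (by simpa [hv₀] using h.feasible v) (dualLoad_nonneg h.nonneg v)
      simp [hzero, hv₀]
    · linarith [h.tight v hv]

lemma exists_isComplementaryPair (E : Finset (Finset V)) (hE : ∀ S ∈ E, S.Nonempty)
    (c : V → ℝ) (hc : ∀ v, 0 ≤ c v) : ∃ M y, IsComplementaryPair E c M y := by
  induction E using Finset.induction_on generalizing c with
  | empty =>
    exact ⟨∅, 0, ⟨by simp, fun _ => le_rfl, fun v => by simpa [dualLoad] using hc v, by simp⟩⟩
  | insert S E hS ih =>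
    obtain ⟨v₀, hv₀, hmin⟩ := S.exists_min_image c (hE S (mem_insert_self S E))
    have hc' : ∀ v, 0 ≤ c v - if v ∈ S then c v₀ else 0 := fun v => by
      split_ifs with hv
      · linarith [hmin v hv]
      · simpa using hc v
    obtain ⟨M, y, h⟩ := ih (fun T hT => hE T (mem_insert_of_mem hT)) _ hc'
    exact ⟨_, _, h.insert hS hv₀ (hc v₀)⟩

end

theorem stmt_10_general {V : Type*} [DecidableEq V]
    (d : ℕ) (hd : 2 ≤ d) (E : Finset (Finset V)) (hunif : ∀ S ∈ E, S.card = d)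
    (c : V → ℝ) (hc : ∀ v, 0 ≤ c v) :
    ∃ (M : Finset V) (y : Finset V → ℝ),
      (∀ S ∈ E, (M ∩ S).Nonempty) ∧
      (∀ S, 0 ≤ y S) ∧
      (∀ v : V, ∑ S ∈ E.filter (fun S => v ∈ S), y S ≤ c v) ∧
      (∀ v ∈ M, ∑ S ∈ E.filter (fun S => v ∈ S), y S = c v) := by
  have hE : ∀ S ∈ E, S.Nonempty := fun S hS => card_pos.1 (by rw [hunif S hS]; omega)
  obtain ⟨M, y, h⟩ := exists_isComplementaryPair E hE c hc
  exact ⟨M, y, h.hits, h.nonneg, h.feasible, h.tight⟩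

/-- for every finite `d`-uniform hypergraph (`d ≥ 2`) with nonnegative costs
there exists a complementary pair: a hitting set `M` and a feasible dual solution `y`
such that every `v ∈ M` is tight for `y`. -/
theorem stmt_10 {V : Type*} [Fintype V] [DecidableEq V]
    (d : ℕ) (hd : 2 ≤ d) (E : Finset (Finset V)) (hunif : ∀ S ∈ E, S.card = d)
    (c : V → ℝ) (hc : ∀ v, 0 ≤ c v) :
    ∃ (M : Finset V) (y : Finset V → ℝ),
      (∀ S ∈ E, (M ∩ S).Nonempty) ∧
      (∀ S, 0 ≤ y S) ∧
      (∀ v : V, ∑ S ∈ E.filter (fun S => v ∈ S), y S ≤ c v) ∧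
      (∀ v ∈ M, ∑ S ∈ E.filter (fun S => v ∈ S), y S = c v) :=
  stmt_10_general d hd E hunif c hc
end

section
/- For every finite d-uniform hypergraph (V, 𝓔) (d ≥ 2) with a nonnegative cost function c : V → ℝ, the Mafia Hitting Set Game has a pure Nash equilibrium; that is, there exists a strategy profile (M, r) such that no single agent can strictly increase his utility by unilaterally changing his own strategy. -/
open Finset
open scoped Classical

namespace MafiaHS

variable {V : Type*} [Fintype V] [DecidableEq V]

noncomputable section

/-- The demand `D(v) = (1/(d-1)) ∑_{S ∋ v} ∑_{m ∈ (M∩S)∖{v}} r(m,S)` asked from agent `v`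
in the Mafia Hitting Set Game. -/
def demand (d : ℕ) (E : Finset (Finset V)) (M : Finset V)
    (r : V → Finset V → ℝ) (v : V) : ℝ :=
  (1 / ((d : ℝ) - 1)) * ∑ S ∈ E.filter (fun S => v ∈ S), ∑ m ∈ (M ∩ S).erase v, r m S

/-- A valid strategy profile of the Mafia Hitting Set Game: ransoms are nonnegative,
`r m S = 0` unless `m` is a mafioso belonging to the club `S ∈ 𝓔`, and every mafioso `m`
distributes exactly `c m` among the clubs containing him. -/
def ValidProfile (E : Finset (Finset V)) (c : V → ℝ)
    (M : Finset V) (r : V → Finset V → ℝ) : Prop :=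
  (∀ m S, 0 ≤ r m S) ∧
  (∀ m S, m ∉ M ∨ m ∉ S ∨ S ∉ E → r m S = 0) ∧
  (∀ m ∈ M, ∑ S ∈ E.filter (fun S => m ∈ S), r m S = c m)

/-- Utility of agent `v` in the Mafia Hitting Set Game.  A mafioso gets
`-c v + F⁺(v) - F⁻(v)` with `F⁻(v) = min(D v, c v)` and
`F⁺(v) = ∑_{S ∋ v} (r(v,S)/(d-1))·(|S∖(P∪{v})| + ∑_{u∈(S∩P)∖{v}} c u / D u)`,
where `P = {u ∈ M : D u > c u}` is the set of protected mafiosi.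
A civilian gets `-D v` minus the penalty `T` if he belongs to an uncovered club. -/
def utility (d : ℕ) (E : Finset (Finset V)) (c : V → ℝ) (T : ℝ)
    (M : Finset V) (r : V → Finset V → ℝ) (v : V) : ℝ :=
  if v ∈ M then
    -c v +
      (∑ S ∈ E.filter (fun S => v ∈ S),
        (r v S / ((d : ℝ) - 1)) *
          ((((S.filter fun u => ¬(u ∈ M ∧ c u < demand d E M r u)).erase v).card : ℝ) +
            ∑ u ∈ (S.filter fun u => u ∈ M ∧ c u < demand d E M r u).erase v,
              c u / demand d E M r u)) -
      min (demand d E M r v) (c v)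
  else
    -demand d E M r v - (if ∃ S ∈ E, v ∈ S ∧ M ∩ S = ∅ then T else 0)

/-- `(M', r')` is a unilateral deviation of agent `v` from `(M, r)`:
all other agents keep their strategies. -/
def Deviation (v : V) (M M' : Finset V) (r r' : V → Finset V → ℝ) : Prop :=
  (∀ u, u ≠ v → (u ∈ M' ↔ u ∈ M)) ∧ ∀ u S, u ≠ v → r' u S = r u S

/-- `(M, r)` is a pure Nash equilibrium of the Mafia Hitting Set Game: a valid profile such
that no agent can strictly increase his utility by a unilateral deviation. -/
def IsNashEq (d : ℕ) (E : Finset (Finset V)) (c : V → ℝ) (T : ℝ)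
    (M : Finset V) (r : V → Finset V → ℝ) : Prop :=
  ValidProfile E c M r ∧
  ∀ (v : V) (M' : Finset V) (r' : V → Finset V → ℝ),
    ValidProfile E c M' r' → Deviation v M M' r r' →
      utility d E c T M' r' v ≤ utility d E c T M r v

end

end MafiaHS

/-!
A minimum-cost hitting set `M` of mafiosi with a ransom whose demands never exceed the costs is
an equilibrium: nobody is protected, so every agent's utility is `-D(v)`; a mafioso never collects
more than he pays, and no deviation changes the deviator's own demand.

Such a ransom exists by LP duality. Otherwise the convex hull of the demand vectors of pure
ransoms is disjoint from `{x ≤ c}`, and separating them gives weights `y ≥ 0` such that, when every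
mafioso `m` pays for the club `S ∋ m` minimising `y(S ∖ {m})`, the `y`-weight of the demand exceeds
`∑ c y`. But minimality of `M` gives the opposite bound: at each threshold the mafiosi whose clubs
all carry much weight can be exchanged for the vertices of large weight without losing the hitting
property, and integrating over the thresholds (layer cake) yields
`∑_m c m · min_S y(S ∖ {m}) ≤ (d - 1) ∑_v c v · y v`.
-/

open MeasureTheory

theorem sum_filter_le_eq_sum_indicator {ι : Type*} (A : Finset ι) (w g : ι → ℝ) (s : ℝ) :
    ∑ a ∈ A with s ≤ g a, w a = ∑ a ∈ A, {x | x ≤ g a}.indicator (fun _ => w a) s := by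
  rw [sum_filter]
  rfl

theorem intervalIntegrable_indicator_setOf_le (a w b₁ b₂ : ℝ) :
    IntervalIntegrable ({x | x ≤ a}.indicator fun _ => w) volume b₁ b₂ :=
  intervalIntegrable_iff.mpr <|
    (intervalIntegrable_iff.mp intervalIntegrable_const).indicator measurableSet_Iic

theorem intervalIntegrable_sum_filter_le {ι : Type*} (A : Finset ι) (w g : ι → ℝ) (b₁ b₂ : ℝ) :
    IntervalIntegrable (fun s => ∑ a ∈ A with s ≤ g a, w a) volume b₁ b₂ := by
  simp_rw [sum_filter_le_eq_sum_indicator, ← sum_fn]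
  exact IntervalIntegrable.sum A fun a _ => intervalIntegrable_indicator_setOf_le ..

theorem sum_mul_eq_integral_sum_filter_le {ι : Type*} (A : Finset ι) (w g : ι → ℝ) {G : ℝ}
    (hg : ∀ a ∈ A, g a ∈ Set.Icc 0 G) :
    ∑ a ∈ A, w a * g a = ∫ s in (0)..G, ∑ a ∈ A with s ≤ g a, w a := by
  simp_rw [sum_filter_le_eq_sum_indicator]
  rw [intervalIntegral.integral_finsetSum fun a _ => intervalIntegrable_indicator_setOf_le ..]
  refine sum_congr rfl fun a ha => ?_
  rw [intervalIntegral.integral_indicator (hg a ha), intervalIntegral.integral_const, smul_eq_mul]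
  ring

theorem sum_mul_le_sum_mul_of_sum_filter_le {ι κ : Type*} {A : Finset ι} {B : Finset κ}
    {w g : ι → ℝ} {w' h : κ → ℝ} (hg : ∀ a ∈ A, 0 ≤ g a) (hh : ∀ b ∈ B, 0 ≤ h b)
    (hle : ∀ s, 0 ≤ s → ∑ a ∈ A with s ≤ g a, w a ≤ ∑ b ∈ B with s ≤ h b, w' b) :
    ∑ a ∈ A, w a * g a ≤ ∑ b ∈ B, w' b * h b := by
  set G := ∑ a ∈ A, g a + ∑ b ∈ B, h b
  have hgG : ∀ a ∈ A, g a ∈ Set.Icc 0 G := fun a ha =>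
    ⟨hg a ha, (single_le_sum hg ha).trans (le_add_of_nonneg_right (sum_nonneg hh))⟩
  have hhG : ∀ b ∈ B, h b ∈ Set.Icc 0 G := fun b hb =>
    ⟨hh b hb, (single_le_sum hh hb).trans (le_add_of_nonneg_left (sum_nonneg hg))⟩
  rw [sum_mul_eq_integral_sum_filter_le A w g hgG, sum_mul_eq_integral_sum_filter_le B w' h hhG]
  exact intervalIntegral.integral_mono_on (add_nonneg (sum_nonneg hg) (sum_nonneg hh))
    (intervalIntegrable_sum_filter_le ..) (intervalIntegrable_sum_filter_le ..)
    fun s hs => hle s hs.1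

theorem exists_nonneg_weights_of_disjoint_Iic {ι : Type*} [Fintype ι] {K : Set (ι → ℝ)}
    (hconv : Convex ℝ K) (hcomp : IsCompact K) {c : ι → ℝ} (hdisj : Disjoint K (Set.Iic c)) :
    ∃ y : ι → ℝ, 0 ≤ y ∧ ∀ x ∈ K, ∑ i, c i * y i < ∑ i, x i * y i := by
  obtain ⟨f, u, v, hfK, huv, hfc⟩ :=
    geometric_hahn_banach_compact_closed hconv hcomp (convex_Iic c) isClosed_Iic hdisj
  have hfc' := hfc c (Set.mem_Iic.2 le_rfl)
  set e : ι → ι → ℝ := fun i j => if i = j then 1 else 0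
  have hf : ∀ x, f x = -∑ i, x i * -f (e i) := fun x => by
    have := (f : (ι → ℝ) →ₗ[ℝ] ℝ).pi_apply_eq_sum_univ x
    simp_all [e]
  refine ⟨fun i => -f (e i), fun i => ?_, fun x hx => ?_⟩
  · by_contra! hi
    have hpos : 0 < f (e i) := by simpa using hi
    -- `Iic c` contains the whole ray from `c` in direction `-e i`, on which `f` is unbounded below
    have ht : 0 ≤ (f c - v) / f (e i) := div_nonneg (by linarith) hpos.le
    have hmem : c - ((f c - v) / f (e i)) • e i ∈ Set.Iic c := fun j => by
      rcases eq_or_ne i j with rfl | hij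
      · simpa [e] using ht
      · simp [e, hij]
    have := hfc _ hmem
    rw [map_sub, map_smul, smul_eq_mul, div_mul_cancel₀ _ hpos.ne'] at this
    linarith
  · have := (hfK x hx).trans (huv.trans hfc')
    rw [hf, hf] at this
    linarith

theorem Finset.cast_card_filter_not_add_sum_filter_le {α : Type*} (s : Finset α) (p : α → Prop)
    [DecidablePred p] (f : α → ℝ) (hf : ∀ x ∈ s, p x → f x ≤ 1) :
    ((s.filter fun x => ¬p x).card : ℝ) + ∑ x ∈ s.filter p, f x ≤ s.card := by
  have hsum : ∑ x ∈ s.filter p, f x ≤ (s.filter p).card := by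
    simpa using sum_le_card_nsmul (s.filter p) f 1 fun x hx =>
      hf x (mem_filter.1 hx).1 (mem_filter.1 hx).2
  have hcard := congrArg (Nat.cast (R := ℝ)) (card_filter_add_card_filter_not (s := s) p)
  push_cast at hcard
  linarith

theorem natCast_sub_one_pos {d : ℕ} (hd : 2 ≤ d) : (0 : ℝ) < d - 1 := by
  have : (2 : ℝ) ≤ d := by exact_mod_cast hd
  linarith

namespace MafiaHS

section

variable {V : Type*} [DecidableEq V]

def IsHittingSet (E : Finset (Finset V)) (A : Finset V) : Prop :=
  ∀ S ∈ E, (A ∩ S).Nonempty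

/-- The factor multiplying `r(v,S) / (d-1)` in `F⁺(v)`. -/
noncomputable def clubShare (d : ℕ) (E : Finset (Finset V)) (c : V → ℝ) (M : Finset V)
    (r : V → Finset V → ℝ) (S : Finset V) (v : V) : ℝ :=
  (((S.filter fun u => ¬(u ∈ M ∧ c u < demand d E M r u)).erase v).card : ℝ) +
    ∑ u ∈ (S.filter fun u => u ∈ M ∧ c u < demand d E M r u).erase v, c u / demand d E M r u

theorem utility_of_mem {d : ℕ} {E : Finset (Finset V)} {c : V → ℝ} {T : ℝ} {M : Finset V}
    {r : V → Finset V → ℝ} {v : V} (hv : v ∈ M) :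
    utility d E c T M r v = -c v + ∑ S ∈ E with v ∈ S, r v S / (d - 1) * clubShare d E c M r S v
      - min (demand d E M r v) (c v) := by
  rw [utility, if_pos hv]
  rfl

theorem utility_of_not_mem {d : ℕ} {E : Finset (Finset V)} {c : V → ℝ} {T : ℝ} {M : Finset V}
    {r : V → Finset V → ℝ} {v : V} (hv : v ∉ M) :
    utility d E c T M r v = -demand d E M r v - if ∃ S ∈ E, v ∈ S ∧ M ∩ S = ∅ then T else 0 := by
  rw [utility, if_neg hv]

theorem clubShare_le {d : ℕ} {E : Finset (Finset V)} {c : V → ℝ} (hc : ∀ v, 0 ≤ c v)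
    {M : Finset V} {r : V → Finset V → ℝ} {S : Finset V} (hS : S.card = d) {v : V} (hv : v ∈ S) :
    clubShare d E c M r S v ≤ d - 1 := by
  rw [clubShare, ← filter_erase, ← filter_erase, ← hS, ← cast_card_erase_of_mem hv]
  refine cast_card_filter_not_add_sum_filter_le _ _ _ fun u _ hu => ?_
  exact div_le_one_of_le₀ hu.2.le ((hc u).trans hu.2.le)

theorem clubShare_eq_of_forall_demand_le {d : ℕ} {E : Finset (Finset V)} {c : V → ℝ}
    {M : Finset V} {r : V → Finset V → ℝ} (hfeas : ∀ u, demand d E M r u ≤ c u)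
    {S : Finset V} (hS : S.card = d) {v : V} (hv : v ∈ S) :
    clubShare d E c M r S v = d - 1 := by
  have hnone : ∀ u, ¬(u ∈ M ∧ c u < demand d E M r u) := fun u hu => (hfeas u).not_gt hu.2
  rw [clubShare, filter_false_of_mem fun u _ => hnone u, filter_true_of_mem fun u _ => hnone u,
    erase_empty, sum_empty, add_zero, ← hS, cast_card_erase_of_mem hv]

theorem demand_eq_of_deviation {d : ℕ} {E : Finset (Finset V)} {v : V} {M M' : Finset V}
    {r r' : V → Finset V → ℝ} (hdev : Deviation v M M' r r') :
    demand d E M' r' v = demand d E M r v := by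
  have hset : ∀ S : Finset V, (M' ∩ S).erase v = (M ∩ S).erase v := fun S => by
    ext u
    simp only [mem_erase, mem_inter]
    exact ⟨fun ⟨huv, hu, huS⟩ => ⟨huv, (hdev.1 u huv).1 hu, huS⟩,
      fun ⟨huv, hu, huS⟩ => ⟨huv, (hdev.1 u huv).2 hu, huS⟩⟩
  unfold demand
  simp_rw [hset]
  congr 1
  exact sum_congr rfl fun S _ => sum_congr rfl fun m hm => hdev.2 m S (mem_erase.1 hm).1

theorem utility_le_neg_min_of_mem {d : ℕ} (hd : 2 ≤ d) {E : Finset (Finset V)}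
    (hunif : ∀ S ∈ E, S.card = d) {c : V → ℝ} (hc : ∀ v, 0 ≤ c v) (T : ℝ) {M : Finset V}
    {r : V → Finset V → ℝ} (hr : ValidProfile E c M r) {v : V} (hv : v ∈ M) :
    utility d E c T M r v ≤ -min (demand d E M r v) (c v) := by
  have hd1 := natCast_sub_one_pos hd
  have hgain : ∑ S ∈ E with v ∈ S, r v S / (d - 1) * clubShare d E c M r S v ≤ c v := by
    rw [← hr.2.2 v hv]
    refine sum_le_sum fun S hS => ?_
    obtain ⟨hSE, hvS⟩ := mem_filter.1 hS
    calc r v S / (d - 1) * clubShare d E c M r S v ≤ r v S / (d - 1) * (d - 1) :=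
          mul_le_mul_of_nonneg_left (clubShare_le hc (hunif S hSE) hvS)
            (div_nonneg (hr.1 v S) hd1.le)
      _ = r v S := div_mul_cancel₀ _ hd1.ne'
  rw [utility_of_mem hv]
  linarith

theorem utility_eq_neg_demand {d : ℕ} (hd : 2 ≤ d) {E : Finset (Finset V)}
    (hunif : ∀ S ∈ E, S.card = d) {c : V → ℝ} (T : ℝ) {M : Finset V} (hM : IsHittingSet E M)
    {r : V → Finset V → ℝ} (hr : ValidProfile E c M r) (hfeas : ∀ u, demand d E M r u ≤ c u)
    (v : V) : utility d E c T M r v = -demand d E M r v := by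
  by_cases hv : v ∈ M
  · have hd1 := (natCast_sub_one_pos hd).ne'
    have hgain : ∑ S ∈ E with v ∈ S, r v S / (d - 1) * clubShare d E c M r S v = c v := by
      rw [← hr.2.2 v hv]
      refine sum_congr rfl fun S hS => ?_
      obtain ⟨hSE, hvS⟩ := mem_filter.1 hS
      rw [clubShare_eq_of_forall_demand_le hfeas (hunif S hSE) hvS, div_mul_cancel₀ _ hd1]
    rw [utility_of_mem hv, hgain, min_eq_left (hfeas v)]
    ring
  · have hcovered : ¬∃ S ∈ E, v ∈ S ∧ M ∩ S = ∅ := fun ⟨S, hS, _, hMS⟩ =>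
      (hM S hS).ne_empty hMS
    rw [utility_of_not_mem hv, if_neg hcovered, sub_zero]

theorem isNashEq_of_forall_demand_le {d : ℕ} (hd : 2 ≤ d) {E : Finset (Finset V)}
    (hunif : ∀ S ∈ E, S.card = d) {c : V → ℝ} (hc : ∀ v, 0 ≤ c v) {T : ℝ} (hT : 0 ≤ T)
    {M : Finset V} (hM : IsHittingSet E M) {r : V → Finset V → ℝ} (hr : ValidProfile E c M r)
    (hfeas : ∀ u, demand d E M r u ≤ c u) : IsNashEq d E c T M r := by
  refine ⟨hr, fun v M' r' hr' hdev => ?_⟩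
  rw [utility_eq_neg_demand hd hunif T hM hr hfeas, ← demand_eq_of_deviation hdev]
  by_cases hv : v ∈ M'
  · calc utility d E c T M' r' v ≤ -min (demand d E M' r' v) (c v) :=
          utility_le_neg_min_of_mem hd hunif hc T hr' hv
      _ = -demand d E M' r' v := by rw [demand_eq_of_deviation hdev, min_eq_left (hfeas v)]
  · rw [utility_of_not_mem hv]
    split_ifs <;> linarith

def pureRansom (c : V → ℝ) (M : Finset V) (σ : V → Finset V) : V → Finset V → ℝ :=
  fun m S => if m ∈ M ∧ S = σ m then c m else 0

theorem validProfile_pureRansom {E : Finset (Finset V)} {c : V → ℝ} (hc : ∀ v, 0 ≤ c v)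
    {M : Finset V} {σ : V → Finset V} (hσ : ∀ m ∈ M, σ m ∈ E ∧ m ∈ σ m) :
    ValidProfile E c M (pureRansom c M σ) := by
  refine ⟨fun m S => ?_, fun m S h => ?_, fun m hm => ?_⟩
  · unfold pureRansom
    split_ifs
    exacts [hc m, le_rfl]
  · refine if_neg ?_
    rintro ⟨hm, rfl⟩
    have := hσ m hm
    tauto
  · simp only [pureRansom, hm, true_and]
    rw [sum_ite_eq', if_pos (mem_filter.2 (hσ m hm))]

theorem convex_setOf_validProfile (E : Finset (Finset V)) (c : V → ℝ) (M : Finset V) :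
    Convex ℝ {r | ValidProfile E c M r} := by
  intro r₁ h₁ r₂ h₂ a b ha hb hab
  refine ⟨fun m S => ?_, fun m S h => ?_, fun m hm => ?_⟩
  · simp only [Pi.add_apply, Pi.smul_apply, smul_eq_mul]
    exact add_nonneg (mul_nonneg ha (h₁.1 m S)) (mul_nonneg hb (h₂.1 m S))
  · simp only [Pi.add_apply, Pi.smul_apply, smul_eq_mul, h₁.2.1 m S h, h₂.2.1 m S h]
    ring
  · simp only [Pi.add_apply, Pi.smul_apply, smul_eq_mul]
    rw [sum_add_distrib, ← mul_sum, ← mul_sum, h₁.2.2 m hm, h₂.2.2 m hm, ← add_mul, hab, one_mul]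

noncomputable def demandMap (d : ℕ) (E : Finset (Finset V)) (M : Finset V) :
    (V → Finset V → ℝ) →ₗ[ℝ] (V → ℝ) where
  toFun r v := demand d E M r v
  map_add' r₁ r₂ := by
    ext v
    simp only [demand, Pi.add_apply, sum_add_distrib, mul_add]
  map_smul' a r := by
    ext v
    simp only [demand, Pi.smul_apply, smul_eq_mul, RingHom.id_apply, ← mul_sum]
    ring

theorem exists_cheapest_clubs {E : Finset (Finset V)} {M : Finset V}
    (hclub : ∀ m ∈ M, ∃ S ∈ E, m ∈ S) (y : V → ℝ) :
    ∃ σ : V → Finset V, (∀ m ∈ M, σ m ∈ E ∧ m ∈ σ m) ∧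
      ∀ m ∈ M, ∀ S ∈ E, m ∈ S → ∑ u ∈ (σ m).erase m, y u ≤ ∑ u ∈ S.erase m, y u := by
  have hex : ∀ m ∈ M, ∃ S ∈ E.filter (m ∈ ·), ∀ S' ∈ E.filter (m ∈ ·),
      ∑ u ∈ S.erase m, y u ≤ ∑ u ∈ S'.erase m, y u := fun m hm =>
    exists_min_image _ _ (by simpa [Finset.Nonempty] using hclub m hm)
  choose! σ hσ hσmin using hex
  exact ⟨σ, fun m hm => mem_filter.1 (hσ m hm),
    fun m hm S hS hmS => hσmin m hm S (mem_filter.2 ⟨hS, hmS⟩)⟩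

end

section

variable {V : Type*} [Fintype V] [DecidableEq V]

theorem exists_min_cost_hitting_set {E : Finset (Finset V)} (hE : ∀ S ∈ E, S.Nonempty)
    {c : V → ℝ} (hc : ∀ v, 0 ≤ c v) :
    ∃ M, IsHittingSet E M ∧ (∀ m ∈ M, ∃ S ∈ E, m ∈ S) ∧
      ∀ A, IsHittingSet E A → ∑ m ∈ M, c m ≤ ∑ a ∈ A, c a := by
  obtain ⟨M, hM, hmin⟩ := exists_min_image (univ.powerset.filter (IsHittingSet E))
    (fun A => ∑ a ∈ A, c a)
    ⟨univ, mem_filter.2 ⟨mem_powerset_self _, fun S hS => by simpa using hE S hS⟩⟩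
  refine ⟨M.filter fun m => ∃ S ∈ E, m ∈ S, fun S hS => ?_, fun m hm => (mem_filter.1 hm).2,
    fun A hA => ?_⟩
  · obtain ⟨m, hm⟩ := (mem_filter.1 hM).2 S hS
    obtain ⟨hmM, hmS⟩ := mem_inter.1 hm
    exact ⟨m, mem_inter.2 ⟨mem_filter.2 ⟨hmM, S, hS, hmS⟩, hmS⟩⟩
  · exact (sum_le_sum_of_subset_of_nonneg (filter_subset _ _) fun m _ _ => hc m).trans
      (hmin A (mem_filter.2 ⟨mem_powerset.2 (subset_univ A), hA⟩))

theorem sum_demand_mul (d : ℕ) (E : Finset (Finset V)) (M : Finset V) (r : V → Finset V → ℝ)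
    (y : V → ℝ) :
    ∑ v, demand d E M r v * y v =
      1 / (d - 1) * ∑ m ∈ M, ∑ S ∈ E with m ∈ S, r m S * ∑ u ∈ S.erase m, y u := by
  calc ∑ v, demand d E M r v * y v
      = 1 / (d - 1) * ∑ v, ∑ S ∈ E with v ∈ S, ∑ m ∈ (M ∩ S).erase v, r m S * y v := by
        simp only [demand, mul_sum, sum_mul, mul_assoc]
    _ = 1 / (d - 1) * ∑ S ∈ E, ∑ v ∈ S, ∑ m ∈ (M ∩ S).erase v, r m S * y v := by
        rw [sum_comm' (t' := E) (s' := id) fun v S => by simp [and_comm]]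
        rfl
    _ = 1 / (d - 1) * ∑ S ∈ E, ∑ m ∈ M ∩ S, ∑ v ∈ S.erase m, r m S * y v := by
        congr 1
        refine sum_congr rfl fun S _ => sum_comm' fun v m => ?_
        simp only [mem_erase, mem_inter]
        tauto
    _ = 1 / (d - 1) * ∑ m ∈ M, ∑ S ∈ E with m ∈ S, r m S * ∑ u ∈ S.erase m, y u := by
        simp only [mul_sum]
        rw [sum_comm' (t' := M) (s' := fun m => E.filter (m ∈ ·)) fun S m => by
          simp only [mem_inter, mem_filter]; tauto]

theorem sum_demand_pureRansom_mul (d : ℕ) {E : Finset (Finset V)} (c : V → ℝ) {M : Finset V}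
    {σ : V → Finset V} (hσ : ∀ m ∈ M, σ m ∈ E ∧ m ∈ σ m) (y : V → ℝ) :
    ∑ v, demand d E M (pureRansom c M σ) v * y v =
      1 / (d - 1) * ∑ m ∈ M, c m * ∑ u ∈ (σ m).erase m, y u := by
  rw [sum_demand_mul]
  congr 1
  refine sum_congr rfl fun m hm => ?_
  simp only [pureRansom, hm, true_and, ite_mul, zero_mul]
  rw [sum_ite_eq', if_pos (mem_filter.2 (hσ m hm))]

theorem sum_filter_le_cost_le {d : ℕ} (hd : 2 ≤ d) {E : Finset (Finset V)}
    (hunif : ∀ S ∈ E, S.card = d) {c : V → ℝ} (hc : ∀ v, 0 ≤ c v) {M : Finset V}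
    (hM : IsHittingSet E M) (hmin : ∀ A, IsHittingSet E A → ∑ m ∈ M, c m ≤ ∑ a ∈ A, c a)
    {y φ : V → ℝ} (hφ : ∀ m ∈ M, ∀ S ∈ E, m ∈ S → φ m ≤ ∑ u ∈ S.erase m, y u) (s : ℝ) :
    ∑ m ∈ M with s ≤ φ m, c m ≤ ∑ v with s ≤ (d - 1) * y v, c v := by
  set F := M.filter (s ≤ φ ·)
  set Y := univ.filter fun v => s ≤ (d - 1) * y v
  have hd1 := natCast_sub_one_pos hd
  -- every club through a member of `F` also meets `Y`, by averaging `y` over the club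
  have hhit : IsHittingSet E (M \ F ∪ Y) := by
    intro S hS
    obtain ⟨m, hm⟩ := hM S hS
    obtain ⟨hmM, hmS⟩ := mem_inter.1 hm
    by_cases hmF : m ∈ F
    · have hcard : ((S.erase m).card : ℝ) = d - 1 := by
        rw [cast_card_erase_of_mem hmS, hunif S hS]
      have hne : (S.erase m).Nonempty := by
        rw [← card_pos, ← Nat.cast_pos (α := ℝ), hcard]
        exact hd1
      have hsum : ∑ _u ∈ S.erase m, s ≤ ∑ u ∈ S.erase m, (d - 1) * y u := by
        rw [sum_const, nsmul_eq_mul, ← mul_sum, hcard]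
        exact mul_le_mul_of_nonneg_left ((mem_filter.1 hmF).2.trans (hφ m hmM S hS hmS))
          hd1.le
      obtain ⟨u, hu, hsu⟩ := exists_le_of_sum_le hne hsum
      exact ⟨u, mem_inter.2 ⟨mem_union_right _ (mem_filter.2 ⟨mem_univ u, hsu⟩),
        mem_of_mem_erase hu⟩⟩
    · exact ⟨m, mem_inter.2 ⟨mem_union_left _ (mem_sdiff.2 ⟨hmM, hmF⟩), hmS⟩⟩
  have hunion := sum_union_inter (s₁ := M \ F) (s₂ := Y) (f := c)
  have hinter : 0 ≤ ∑ a ∈ M \ F ∩ Y, c a := sum_nonneg fun a _ => hc a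
  have hsdiff := sum_sdiff_eq_sub (filter_subset (s ≤ φ ·) M) (f := c)
  linarith [hmin _ hhit]

theorem exists_nonneg_weights_of_forall_demand_gt {d : ℕ} {E : Finset (Finset V)} {c : V → ℝ}
    (hc : ∀ v, 0 ≤ c v) {M : Finset V}
    (hbad : ∀ r, ValidProfile E c M r → ∃ v, c v < demand d E M r v) :
    ∃ y : V → ℝ, 0 ≤ y ∧ ∀ σ : V → Finset V, (∀ m ∈ M, σ m ∈ E ∧ m ∈ σ m) →
      ∑ v, c v * y v < ∑ v, demand d E M (pureRansom c M σ) v * y v := by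
  set pure := {σ : V → Finset V | ∀ m ∈ M, σ m ∈ E ∧ m ∈ σ m}
  set P := demandMap d E M '' (pureRansom c M '' pure)
  have hP : convexHull ℝ P ⊆ demandMap d E M '' {r | ValidProfile E c M r} := by
    rw [← LinearMap.image_convexHull]
    refine Set.image_mono (convexHull_min ?_ (convex_setOf_validProfile E c M))
    rintro _ ⟨σ, hσ, rfl⟩
    exact validProfile_pureRansom hc hσ
  have hdisj : Disjoint (convexHull ℝ P) (Set.Iic c) := Set.disjoint_left.2 fun x hx hxc => by
    obtain ⟨r, hr, rfl⟩ := hP hx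
    obtain ⟨v, hv⟩ := hbad r hr
    exact (hxc v).not_gt hv
  obtain ⟨y, hy, hsep⟩ := exists_nonneg_weights_of_disjoint_Iic (convex_convexHull ℝ _)
    (((Set.toFinite pure).image _).image _ |>.isCompact_convexHull (𝕜 := ℝ)) hdisj
  exact ⟨y, hy, fun σ hσ => hsep _ (subset_convexHull ℝ _ ⟨_, ⟨σ, hσ, rfl⟩, rfl⟩)⟩

theorem sum_cost_mul_le_of_min_cost {d : ℕ} (hd : 2 ≤ d) {E : Finset (Finset V)}
    (hunif : ∀ S ∈ E, S.card = d) {c : V → ℝ} (hc : ∀ v, 0 ≤ c v) {M : Finset V}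
    (hM : IsHittingSet E M) (hmin : ∀ A, IsHittingSet E A → ∑ m ∈ M, c m ≤ ∑ a ∈ A, c a)
    {y φ : V → ℝ} (hy : 0 ≤ y) (hφ₀ : ∀ m ∈ M, 0 ≤ φ m)
    (hφ : ∀ m ∈ M, ∀ S ∈ E, m ∈ S → φ m ≤ ∑ u ∈ S.erase m, y u) :
    ∑ m ∈ M, c m * φ m ≤ (d - 1) * ∑ v, c v * y v := by
  have hd1 := (natCast_sub_one_pos hd).le
  rw [mul_sum]
  simp only [mul_left_comm _ (c _)]
  exact sum_mul_le_sum_mul_of_sum_filter_le hφ₀ (fun v _ => mul_nonneg hd1 (hy v))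
    fun s _ => sum_filter_le_cost_le hd hunif hc hM hmin hφ s

theorem exists_validProfile_forall_demand_le {d : ℕ} (hd : 2 ≤ d) {E : Finset (Finset V)}
    (hunif : ∀ S ∈ E, S.card = d) {c : V → ℝ} (hc : ∀ v, 0 ≤ c v) :
    ∃ M r, IsHittingSet E M ∧ ValidProfile E c M r ∧ ∀ v, demand d E M r v ≤ c v := by
  have hd1 := natCast_sub_one_pos hd
  obtain ⟨M, hM, hclub, hmin⟩ := exists_min_cost_hitting_set
    (fun S hS => card_pos.1 (by rw [hunif S hS]; omega)) hc
  refine ⟨M, ?_⟩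
  by_contra! hbad
  obtain ⟨y, hy, hsep⟩ := exists_nonneg_weights_of_forall_demand_gt hc (hbad · hM)
  obtain ⟨σ, hσ, hσmin⟩ := exists_cheapest_clubs hclub y
  have hlt := hsep σ hσ
  rw [sum_demand_pureRansom_mul d c hσ, div_mul_eq_mul_div, one_mul, lt_div_iff₀ hd1] at hlt
  have hle := sum_cost_mul_le_of_min_cost hd hunif hc hM hmin hy
    (fun m _ => sum_nonneg fun u _ => hy u) hσmin
  linarith

/-- the Mafia Hitting Set Game on a finite `d`-uniform hypergraph (`d ≥ 2`)
with nonnegative costs always has a pure Nash equilibrium. -/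
theorem stmt_12 (d : ℕ) (hd : 2 ≤ d) (E : Finset (Finset V))
    (hunif : ∀ S ∈ E, S.card = d)
    (c : V → ℝ) (hc : ∀ v, 0 ≤ c v) (T : ℝ) (hT : 2 * ∑ v, c v < T) :
    ∃ (M : Finset V) (r : V → Finset V → ℝ), IsNashEq d E c T M r := by
  obtain ⟨M, r, hM, hr, hfeas⟩ := exists_validProfile_forall_demand_le hd hunif hc
  have hT0 : 0 ≤ T := by linarith [Fintype.sum_nonneg (f := c) hc]
  exact ⟨M, r, isNashEq_of_forall_demand_le hd hunif hc hT0 hM hr hfeas⟩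

end

end MafiaHS
end

section
/- Let the strategy profile (M, r) of the Mafia Hitting Set Game be a pure Nash equilibrium and let v be a civilian (v ∈ V∖M). Then D(v) ≤ (d/(d−1))·c(v). -/
/-!
An equilibrium has no protected mafioso. An unprotected mafioso earns at least his cost `c m`:
otherwise he would quit the mafia, or, if he is the only mafioso of some club, move all his
ransom there. A club containing a protected mafioso `u` pays `m` only the weight `c u / D u < 1`
for `u`, so `m` levies nothing on such a club. Protected mafiosi are therefore extorted only by
each other, and double counting shows that their total demand is at most their total cost.

Now let a civilian `v` have `(d - 1) D v > d c v`, and let him join the mafia, spreading `c v`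
over his clubs in proportion to the ransom levied on him there. No club-mate's demand then
exceeds `d / (d - 1)` times his cost, so each club-mate weighs at least `(d - 1) / d` in
`F⁺(v)`, whence `F⁺(v) ≥ (d - 1) / d · c v`. Since joining is not profitable,
`d D v ≤ (d + 1) c v`, which contradicts `(d - 1) D v > d c v` because `d² - 1 < d²`.
-/

open Finset
open scoped Classical

namespace MafiaHS

section

variable {V : Type*} [DecidableEq V] {d : ℕ} {E : Finset (Finset V)} {c : V → ℝ} {T : ℝ}
  {M : Finset V} {r : V → Finset V → ℝ} {m u v : V} {S : Finset V}

noncomputable def shareWeight (d : ℕ) (E : Finset (Finset V)) (c : V → ℝ) (M : Finset V)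
    (r : V → Finset V → ℝ) (u : V) : ℝ :=
  if u ∈ M ∧ c u < demand d E M r u then c u / demand d E M r u else 1

/-- The income `F⁺(m)` of mafioso `m`, with the bracket of the paper written as a sum of
`shareWeight`s over the other members of the club. -/
noncomputable def ransomIncome (d : ℕ) (E : Finset (Finset V)) (c : V → ℝ) (M : Finset V)
    (r : V → Finset V → ℝ) (m : V) : ℝ :=
  ∑ S ∈ E.filter (fun S => m ∈ S),
    r m S / ((d : ℝ) - 1) * ∑ u ∈ S.erase m, shareWeight d E c M r u

lemma sum_erase_shareWeight (S : Finset V) (m : V) :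
    ∑ u ∈ S.erase m, shareWeight d E c M r u =
      (((S.filter fun u => ¬(u ∈ M ∧ c u < demand d E M r u)).erase m).card : ℝ) +
        ∑ u ∈ (S.filter fun u => u ∈ M ∧ c u < demand d E M r u).erase m,
          c u / demand d E M r u := by
  simp only [shareWeight, sum_ite, filter_erase, sum_const, nsmul_one, add_comm]

lemma utility_of_mem_s14 (hm : m ∈ M) :
    utility d E c T M r m = -c m + ransomIncome d E c M r m - min (demand d E M r m) (c m) := by
  simp only [utility, if_pos hm, ransomIncome, sum_erase_shareWeight]

lemma utility_of_notMem (hm : m ∉ M) :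
    utility d E c T M r m =
      -demand d E M r m - if ∃ S ∈ E, m ∈ S ∧ M ∩ S = ∅ then T else 0 := by
  simp only [utility, if_neg hm]

lemma natCast_sub_one_pos (hd : 2 ≤ d) : (0 : ℝ) < d - 1 := by
  have : (2 : ℝ) ≤ d := by exact_mod_cast hd
  linarith

lemma card_erase_of_mem_club (hunif : ∀ S ∈ E, S.card = d) (hS : S ∈ E) (hmS : m ∈ S) :
    ((S.erase m).card : ℝ) = d - 1 := by
  rw [card_erase_of_mem hmS, hunif S hS, Nat.cast_pred (hunif S hS ▸ card_pos.2 ⟨m, hmS⟩)]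

lemma sub_one_mul_demand (hd : 2 ≤ d) (v : V) :
    ((d : ℝ) - 1) * demand d E M r v =
      ∑ S ∈ E.filter (fun S => v ∈ S), ∑ m ∈ (M ∩ S).erase v, r m S := by
  rw [demand, ← mul_assoc, mul_one_div_cancel (natCast_sub_one_pos hd).ne', one_mul]

lemma Deviation.demand_eq {M' : Finset V} {r' : V → Finset V → ℝ}
    (h : Deviation v M M' r r') : demand d E M' r' v = demand d E M r v := by
  have hset : ∀ S : Finset V, (M' ∩ S).erase v = (M ∩ S).erase v := fun S => by
    ext u
    simp only [mem_erase, mem_inter]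
    exact and_congr_right fun hu => and_congr_left fun _ => h.1 u hu
  unfold demand
  congr 1
  refine sum_congr rfl fun S _ => ?_
  rw [hset]
  exact sum_congr rfl fun m hm => h.2 m S (ne_of_mem_erase hm)

lemma demand_insert_update {ρ : Finset V → ℝ} (hv : v ∉ M) (huv : u ≠ v)
    (hρ : ∀ S, v ∉ S → ρ S = 0) :
    demand d E (insert v M) (Function.update r v ρ) u =
      demand d E M r u + 1 / ((d : ℝ) - 1) * ∑ S ∈ E.filter (fun S => u ∈ S), ρ S := by
  have hunchanged : ∀ S, ∑ m ∈ (M ∩ S).erase u, Function.update r v ρ m S =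
      ∑ m ∈ (M ∩ S).erase u, r m S := fun S =>
    sum_congr rfl fun m hm => by
      rw [Function.update_of_ne (ne_of_mem_of_not_mem (mem_inter.1 (mem_of_mem_erase hm)).1 hv)]
  unfold demand
  rw [← mul_add, ← sum_add_distrib]
  congr 1
  refine sum_congr rfl fun S _ => ?_
  by_cases hvS : v ∈ S
  · rw [insert_inter_of_mem hvS, erase_insert_of_ne huv.symm,
      sum_insert fun h => hv (mem_inter.1 (mem_of_mem_erase h)).1, hunchanged,
      Function.update_self, add_comm]
  · rw [insert_inter_of_notMem hvS, hunchanged, hρ S hvS, add_zero]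

lemma ValidProfile.insert_update {ρ : Finset V → ℝ} (h : ValidProfile E c M r)
    (hρ_nonneg : ∀ S, 0 ≤ ρ S) (hρ_zero : ∀ S, ¬(S ∈ E ∧ m ∈ S) → ρ S = 0)
    (hρ_sum : ∑ S ∈ E.filter (fun S => m ∈ S), ρ S = c m) :
    ValidProfile E c (insert m M) (Function.update r m ρ) := by
  refine ⟨fun w S => ?_, fun w S hw => ?_, fun w hw => ?_⟩
  · rcases eq_or_ne w m with rfl | hwm
    · simpa using hρ_nonneg S
    · simpa [hwm] using h.1 w S
  · rcases eq_or_ne w m with rfl | hwm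
    · simp only [Function.update_self]
      exact hρ_zero S (by simp only [mem_insert_self, not_true, false_or] at hw; tauto)
    · simpa [hwm] using h.2.1 w S (by simpa [hwm] using hw)
  · rcases eq_or_ne w m with rfl | hwm
    · simpa using hρ_sum
    · simpa [hwm] using h.2.2 w (by simpa [hwm] using hw)

lemma ValidProfile.erase_update (h : ValidProfile E c M r) :
    ValidProfile E c (M.erase m) (Function.update r m 0) := by
  refine ⟨fun w S => ?_, fun w S hw => ?_, fun w hw => ?_⟩
  · rcases eq_or_ne w m with rfl | hwm
    · simp
    · simpa [hwm] using h.1 w S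
  · rcases eq_or_ne w m with rfl | hwm
    · simp
    · simpa [hwm] using h.2.1 w S (by simpa [hwm] using hw)
  · have hwm : w ≠ m := ne_of_mem_erase hw
    simpa [hwm] using h.2.2 w (mem_of_mem_erase hw)

lemma deviation_insert_update (ρ : Finset V → ℝ) :
    Deviation m M (insert m M) r (Function.update r m ρ) :=
  ⟨fun u hu => by simp [hu], fun u S hu => by simp [hu]⟩

lemma deviation_erase_update (ρ : Finset V → ℝ) :
    Deviation m M (M.erase m) r (Function.update r m ρ) :=
  ⟨fun u hu => by simp [hu], fun u S hu => by simp [hu]⟩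

lemma shareWeight_le_one (hcu : 0 ≤ c u) : shareWeight d E c M r u ≤ 1 := by
  unfold shareWeight
  split_ifs with h
  · exact div_le_one_of_le₀ h.2.le (hcu.trans h.2.le)
  · exact le_rfl

lemma le_shareWeight {θ : ℝ} (hθ : θ ≤ 1) (hcu : 0 ≤ c u)
    (h : u ∈ M → c u < demand d E M r u → θ * demand d E M r u ≤ c u) :
    θ ≤ shareWeight d E c M r u := by
  unfold shareWeight
  split_ifs with hp
  · rw [le_div_iff₀ (hcu.trans_lt hp.2)]
    exact h hp.1 hp.2
  · exact hθ

lemma sum_shareWeight_le_card (hc : ∀ u, 0 ≤ c u) (s : Finset V) :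
    ∑ u ∈ s, shareWeight d E c M r u ≤ s.card := by
  simpa using sum_le_card_nsmul s (shareWeight d E c M r) 1 fun u _ => shareWeight_le_one (hc u)

lemma sum_shareWeight_le_card_sub {s : Finset V} (hc : ∀ u, 0 ≤ c u) (hu : u ∈ s) :
    ∑ w ∈ s, shareWeight d E c M r w ≤ s.card - (1 - shareWeight d E c M r u) := by
  have hgap := single_le_sum (f := fun w => 1 - shareWeight d E c M r w)
    (fun w _ => sub_nonneg.2 (shareWeight_le_one (hc w))) hu
  simp only [sum_sub_distrib, sum_const, nsmul_one] at hgap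
  linarith

lemma ransomIncome_le (hd : 2 ≤ d) (hunif : ∀ S ∈ E, S.card = d) (hc : ∀ u, 0 ≤ c u)
    (hval : ValidProfile E c M r) (hm : m ∈ M) (hS : S ∈ E) (hmS : m ∈ S)
    (hu : u ∈ S.erase m) :
    ransomIncome d E c M r m ≤
      c m - r m S / ((d : ℝ) - 1) * (1 - shareWeight d E c M r u) := by
  have hd1 := natCast_sub_one_pos hd
  set term := fun S' => r m S' / ((d : ℝ) - 1) * ∑ w ∈ S'.erase m, shareWeight d E c M r w
  have hclub : ∀ S' ∈ E.filter (fun S' => m ∈ S'), term S' ≤ r m S' := fun S' hS' => by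
    obtain ⟨hS'E, hmS'⟩ := mem_filter.1 hS'
    calc term S' ≤ r m S' / ((d : ℝ) - 1) * ((d : ℝ) - 1) := by
          refine mul_le_mul_of_nonneg_left ?_ (div_nonneg (hval.1 m S') hd1.le)
          rw [← card_erase_of_mem_club hunif hS'E hmS']
          exact sum_shareWeight_le_card hc _
      _ = r m S' := div_mul_cancel₀ _ hd1.ne'
  have hSmem : S ∈ E.filter (fun S' => m ∈ S') := mem_filter.2 ⟨hS, hmS⟩
  have hgap : term S ≤ r m S - r m S / ((d : ℝ) - 1) * (1 - shareWeight d E c M r u) := by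
    calc term S ≤ r m S / ((d : ℝ) - 1) *
          ((d : ℝ) - 1 - (1 - shareWeight d E c M r u)) := by
          refine mul_le_mul_of_nonneg_left ?_ (div_nonneg (hval.1 m S) hd1.le)
          rw [← card_erase_of_mem_club hunif hS hmS]
          exact sum_shareWeight_le_card_sub hc hu
      _ = _ := by field_simp
  calc ransomIncome d E c M r m
        = term S + ∑ S' ∈ (E.filter (fun S' => m ∈ S')).erase S, term S' :=
        (add_sum_erase _ _ hSmem).symm
    _ ≤ (r m S - r m S / ((d : ℝ) - 1) * (1 - shareWeight d E c M r u)) +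
          ∑ S' ∈ (E.filter (fun S' => m ∈ S')).erase S, r m S' :=
        add_le_add hgap (sum_le_sum fun S' hS' => hclub S' (mem_of_mem_erase hS'))
    _ = _ := by rw [← hval.2.2 m hm, ← add_sum_erase _ _ hSmem]; ring

lemma mul_cost_le_ransomIncome {θ : ℝ} (hd : 2 ≤ d) (hunif : ∀ S ∈ E, S.card = d)
    (hval : ValidProfile E c M r) (hm : m ∈ M)
    (hθ : ∀ S ∈ E, m ∈ S → r m S ≠ 0 →
      ∀ u ∈ S.erase m, θ ≤ shareWeight d E c M r u) :
    θ * c m ≤ ransomIncome d E c M r m := by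
  rw [← hval.2.2 m hm, mul_comm, sum_mul]
  refine sum_le_sum fun S hS => ?_
  obtain ⟨hSE, hmS⟩ := mem_filter.1 hS
  rcases eq_or_ne (r m S) 0 with h0 | h0
  · simp [h0]
  have hcard : ((d : ℝ) - 1) * θ ≤ ∑ u ∈ S.erase m, shareWeight d E c M r u := by
    simpa [card_erase_of_mem_club hunif hSE hmS] using
      card_nsmul_le_sum _ _ θ (hθ S hSE hmS h0)
  calc r m S * θ = r m S / ((d : ℝ) - 1) * (((d : ℝ) - 1) * θ) := by
        field_simp [(natCast_sub_one_pos hd).ne']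
    _ ≤ _ := mul_le_mul_of_nonneg_left hcard (div_nonneg (hval.1 m S) (natCast_sub_one_pos hd).le)

/-- Moving his whole ransom to a club where he is the only mafioso earns `m` exactly `c m`. -/
lemma cost_le_ransomIncome_of_pivotal (hd : 2 ≤ d) (hunif : ∀ S ∈ E, S.card = d)
    (hc : ∀ u, 0 ≤ c u) (hnash : IsNashEq d E c T M r) (hm : m ∈ M) (hS : S ∈ E)
    (hpiv : M ∩ S = {m}) : c m ≤ ransomIncome d E c M r m := by
  have hmS : m ∈ S := (mem_inter.1 (hpiv ▸ mem_singleton_self m)).2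
  set r' := Function.update r m (Pi.single S (c m))
  have hval' : ValidProfile E c (insert m M) r' := by
    refine hnash.1.insert_update (fun S' => ?_) (fun S' hS' => ?_) ?_
    · rcases eq_or_ne S' S with rfl | h
      · simpa using hc m
      · simp [Pi.single_eq_of_ne h]
    · exact Pi.single_eq_of_ne (by rintro rfl; exact hS' ⟨hS, hmS⟩) _
    · simp [sum_pi_single', hS, hmS]
  have hdev : Deviation m M (insert m M) r r' := deviation_insert_update _
  have hle := hnash.2 m _ r' hval' hdev
  rw [insert_eq_of_mem hm] at hval' hdev hle
  rw [utility_of_mem_s14 hm, utility_of_mem_s14 hm, hdev.demand_eq] at hle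
  have hincome : 1 * c m ≤ ransomIncome d E c M r' m := by
    refine mul_cost_le_ransomIncome hd hunif hval' hm fun S' _ _ hr' u hu => ?_
    obtain rfl : S' = S := by
      by_contra h
      simp [r', Pi.single_eq_of_ne h] at hr'
    have huM : u ∉ M := fun huM => ne_of_mem_erase hu
      (mem_singleton.1 (hpiv ▸ mem_inter.2 ⟨huM, mem_of_mem_erase hu⟩))
    exact le_shareWeight le_rfl (hc u) fun h => absurd h huM
  linarith

/-- Leaving the mafia costs a non-pivotal mafioso no penalty. -/
lemma cost_le_ransomIncome_of_not_pivotal (hnash : IsNashEq d E c T M r) (hm : m ∈ M)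
    (hdm : demand d E M r m ≤ c m) (hpiv : ∀ S ∈ E, M ∩ S ≠ {m}) :
    c m ≤ ransomIncome d E c M r m := by
  have hdev : Deviation m M (M.erase m) r (Function.update r m 0) := deviation_erase_update _
  have hle := hnash.2 m _ _ hnash.1.erase_update hdev
  have hpen : ¬∃ S ∈ E, m ∈ S ∧ M.erase m ∩ S = ∅ := by
    rintro ⟨S, hS, hmS, hempty⟩
    rw [erase_inter, erase_eq_empty_iff] at hempty
    rcases hempty with h | h
    · exact notMem_empty m (h ▸ mem_inter.2 ⟨hm, hmS⟩)
    · exact hpiv S hS h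
  rw [utility_of_notMem (notMem_erase m M), utility_of_mem_s14 hm, hdev.demand_eq, if_neg hpen,
    min_eq_left hdm] at hle
  linarith

lemma cost_le_ransomIncome (hd : 2 ≤ d) (hunif : ∀ S ∈ E, S.card = d) (hc : ∀ u, 0 ≤ c u)
    (hnash : IsNashEq d E c T M r) (hm : m ∈ M) (hdm : demand d E M r m ≤ c m) :
    c m ≤ ransomIncome d E c M r m := by
  by_cases hpiv : ∃ S ∈ E, M ∩ S = {m}
  · obtain ⟨S, hS, h⟩ := hpiv
    exact cost_le_ransomIncome_of_pivotal hd hunif hc hnash hm hS h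
  · push Not at hpiv
    exact cost_le_ransomIncome_of_not_pivotal hnash hm hdm hpiv

lemma ransom_eq_zero_of_protected (hd : 2 ≤ d) (hunif : ∀ S ∈ E, S.card = d)
    (hc : ∀ u, 0 ≤ c u) (hnash : IsNashEq d E c T M r) (hm : m ∈ M)
    (hdm : demand d E M r m ≤ c m) (hS : S ∈ E) (hmS : m ∈ S) (hu : u ∈ S.erase m)
    (huM : u ∈ M) (hprot : c u < demand d E M r u) : r m S = 0 := by
  have hgap : 0 < 1 - shareWeight d E c M r u := by
    rw [shareWeight, if_pos ⟨huM, hprot⟩, sub_pos]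
    exact (div_lt_one ((hc u).trans_lt hprot)).2 hprot
  have hle := ransomIncome_le hd hunif hc hnash.1 hm hS hmS hu
  have hge := cost_le_ransomIncome hd hunif hc hnash hm hdm
  by_contra hne
  have hr : 0 < r m S := (hnash.1.1 m S).lt_of_ne' hne
  nlinarith [mul_pos (div_pos hr (natCast_sub_one_pos hd)) hgap]

lemma sum_sum_erase_le {α : Type*} [DecidableEq α] {s : Finset α} {f : α → ℝ}
    (hf : ∀ x ∈ s, 0 ≤ f x) {n : ℕ} (hs : s.card ≤ n) :
    ∑ x ∈ s, ∑ y ∈ s.erase x, f y ≤ ((n : ℝ) - 1) * ∑ x ∈ s, f x := by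
  rw [sum_congr rfl fun x hx => sum_erase_eq_sub (f := f) hx, sum_sub_distrib, sum_const,
    nsmul_eq_mul, ← sub_one_mul]
  exact mul_le_mul_of_nonneg_right (by gcongr) (sum_nonneg hf)

/-- Every ransom landing on `P` comes from `P` itself and is shared among at most `d - 1`
club-mates. -/
lemma sum_demand_le_sum_cost (hd : 2 ≤ d) (hunif : ∀ S ∈ E, S.card = d)
    (hval : ValidProfile E c M r) {P : Finset V} (hPM : P ⊆ M)
    (hP : ∀ u ∈ P, ∀ S ∈ E, u ∈ S → ∀ m ∈ M ∩ S, m ∉ P → r m S = 0) :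
    ∑ u ∈ P, demand d E M r u ≤ ∑ u ∈ P, c u := by
  have hinner : ∀ u ∈ P, ∀ S ∈ E.filter (fun S => u ∈ S),
      ∑ m ∈ (M ∩ S).erase u, r m S = ∑ m ∈ (P ∩ S).erase u, r m S := by
    intro u hu S hS
    obtain ⟨hSE, huS⟩ := mem_filter.1 hS
    symm
    refine sum_subset (erase_subset_erase _ (inter_subset_inter_right hPM)) fun m hm hmP => ?_
    obtain ⟨hmu, hmMS⟩ := mem_erase.1 hm
    exact hP u hu S hSE huS m hmMS fun h =>
      hmP (mem_erase.2 ⟨hmu, mem_inter.2 ⟨h, (mem_inter.1 hmMS).2⟩⟩)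
  have hcount : ∑ u ∈ P, ((d : ℝ) - 1) * demand d E M r u ≤
      ∑ m ∈ P, ((d : ℝ) - 1) * c m :=
    calc ∑ u ∈ P, ((d : ℝ) - 1) * demand d E M r u
        = ∑ u ∈ P, ∑ S ∈ E.filter (fun S => u ∈ S), ∑ m ∈ (P ∩ S).erase u, r m S :=
          sum_congr rfl fun u hu => by
            rw [sub_one_mul_demand hd]; exact sum_congr rfl (hinner u hu)
      _ = ∑ S ∈ E, ∑ u ∈ P ∩ S, ∑ m ∈ (P ∩ S).erase u, r m S :=
          sum_comm' fun u S => by simp only [mem_filter, mem_inter]; tauto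
      _ ≤ ∑ S ∈ E, ((d : ℝ) - 1) * ∑ m ∈ P ∩ S, r m S :=
          sum_le_sum fun S hS => sum_sum_erase_le (fun m _ => hval.1 m S)
            ((card_le_card inter_subset_right).trans (hunif S hS).le)
      _ = ∑ m ∈ P, ((d : ℝ) - 1) * ∑ S ∈ E.filter (fun S => m ∈ S), r m S := by
          simp only [mul_sum]
          exact sum_comm' fun S m => by simp only [mem_filter, mem_inter]; tauto
      _ = ∑ m ∈ P, ((d : ℝ) - 1) * c m :=
          sum_congr rfl fun m hm => by rw [hval.2.2 m (hPM hm)]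
  rw [← mul_sum, ← mul_sum] at hcount
  exact le_of_mul_le_mul_left hcount (natCast_sub_one_pos hd)

lemma demand_le_cost_of_mem (hd : 2 ≤ d) (hunif : ∀ S ∈ E, S.card = d) (hc : ∀ u, 0 ≤ c u)
    (hnash : IsNashEq d E c T M r) (hu : u ∈ M) : demand d E M r u ≤ c u := by
  set P := M.filter fun u => c u < demand d E M r u
  have hsum : ∑ u ∈ P, demand d E M r u ≤ ∑ u ∈ P, c u := by
    refine sum_demand_le_sum_cost hd hunif hnash.1 (filter_subset _ _) ?_
    intro u hu S hS huS m hm hmP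
    obtain ⟨hmM, hmS⟩ := mem_inter.1 hm
    have hum : u ≠ m := by rintro rfl; exact hmP hu
    exact ransom_eq_zero_of_protected hd hunif hc hnash hmM
      (not_lt.1 fun h => hmP (mem_filter.2 ⟨hmM, h⟩)) hS hmS (mem_erase.2 ⟨hum, huS⟩)
      (mem_filter.1 hu).1 (mem_filter.1 hu).2
  by_contra! h
  exact (sum_lt_sum_of_nonempty ⟨u, mem_filter.2 ⟨hu, h⟩⟩ fun w hw =>
    (mem_filter.1 hw).2).not_ge hsum

/-- The ransom with which a civilian `v` joins the mafia. -/
noncomputable def joinRansom (d : ℕ) (E : Finset (Finset V)) (c : V → ℝ) (M : Finset V)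
    (r : V → Finset V → ℝ) (v : V) (S : Finset V) : ℝ :=
  if S ∈ E ∧ v ∈ S then
    c v / (((d : ℝ) - 1) * demand d E M r v) * ∑ m ∈ (M ∩ S).erase v, r m S
  else 0

lemma joinRansom_of_mem (h : S ∈ E ∧ v ∈ S) :
    joinRansom d E c M r v S =
      c v / (((d : ℝ) - 1) * demand d E M r v) * ∑ m ∈ (M ∩ S).erase v, r m S :=
  if_pos h

lemma joinRansom_of_notMem (h : ¬(S ∈ E ∧ v ∈ S)) : joinRansom d E c M r v S = 0 :=
  if_neg h

lemma joinRansom_nonneg (hd : 2 ≤ d) (hval : ValidProfile E c M r) (hcv : 0 ≤ c v)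
    (hDv : 0 ≤ demand d E M r v) (S : Finset V) : 0 ≤ joinRansom d E c M r v S := by
  unfold joinRansom
  split_ifs
  · exact mul_nonneg (div_nonneg hcv (mul_nonneg (natCast_sub_one_pos hd).le hDv))
      (sum_nonneg fun m _ => hval.1 m S)
  · exact le_rfl

lemma sum_joinRansom (hd : 2 ≤ d) (hDv : demand d E M r v ≠ 0) :
    ∑ S ∈ E.filter (fun S => v ∈ S), joinRansom d E c M r v S = c v := by
  rw [sum_congr rfl fun S hS => joinRansom_of_mem (mem_filter.1 hS), ← mul_sum,
    ← sub_one_mul_demand hd, div_mul_cancel₀ _ (mul_ne_zero (natCast_sub_one_pos hd).ne' hDv)]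

lemma sum_joinRansom_le (hd : 2 ≤ d) (hval : ValidProfile E c M r) (hv : v ∉ M) (hu : u ∈ M)
    (hcv : 0 ≤ c v) (hcu : 0 ≤ c u) (hDu : demand d E M r u ≤ c u)
    (hDv : 0 < demand d E M r v) (hjoin : d * c v ≤ ((d : ℝ) - 1) * demand d E M r v) :
    ∑ S ∈ E.filter (fun S => u ∈ S), joinRansom d E c M r v S ≤ c u := by
  set K := ((d : ℝ) - 1) * demand d E M r v
  have hK : 0 < K := mul_pos (natCast_sub_one_pos hd) hDv
  have hclub : ∀ S ∈ E.filter (fun S => u ∈ S), joinRansom d E c M r v S ≤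
      c v / K * (r u S + ∑ m ∈ (M ∩ S).erase u, r m S) := fun S hS => by
    unfold joinRansom
    split_ifs
    · rw [erase_eq_of_notMem fun h => hv (mem_inter.1 h).1,
        add_sum_erase _ (fun m => r m S) (mem_inter.2 ⟨hu, (mem_filter.1 hS).2⟩)]
    · exact mul_nonneg (div_nonneg hcv hK.le)
        (add_nonneg (hval.1 u S) (sum_nonneg fun m _ => hval.1 m S))
  calc ∑ S ∈ E.filter (fun S => u ∈ S), joinRansom d E c M r v S
      ≤ c v / K * (c u + ((d : ℝ) - 1) * demand d E M r u) := by
        rw [← hval.2.2 u hu, sub_one_mul_demand hd, ← sum_add_distrib, mul_sum]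
        exact sum_le_sum hclub
    _ ≤ c v / K * (d * c u) := by
        gcongr
        nlinarith [natCast_sub_one_pos hd]
    _ ≤ c u := by
        rw [div_mul_eq_mul_div, div_le_iff₀ hK]
        nlinarith

lemma sub_one_mul_demand_join_le (hd : 2 ≤ d) (hc : ∀ u, 0 ≤ c u)
    (hval : ValidProfile E c M r) (hv : v ∉ M) (hu : u ∈ M) (huv : u ≠ v)
    (hDu : demand d E M r u ≤ c u) (hDv : 0 < demand d E M r v)
    (hjoin : d * c v ≤ ((d : ℝ) - 1) * demand d E M r v) :
    ((d : ℝ) - 1) *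
        demand d E (insert v M) (Function.update r v (joinRansom d E c M r v)) u ≤
      d * c u := by
  have hd1 := natCast_sub_one_pos hd
  rw [demand_insert_update hv huv fun S hvS => joinRansom_of_notMem fun h => hvS h.2, mul_add,
    ← mul_assoc, mul_one_div_cancel hd1.ne', one_mul]
  have := sum_joinRansom_le hd hval hv hu (hc v) (hc u) hDu hDv hjoin
  nlinarith

lemma mul_demand_le_of_notMem (hd : 2 ≤ d) (hunif : ∀ S ∈ E, S.card = d)
    (hc : ∀ u, 0 ≤ c u) (hT : 0 ≤ T) (hnash : IsNashEq d E c T M r) (hv : v ∉ M)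
    (hjoin : d * c v < ((d : ℝ) - 1) * demand d E M r v) :
    d * demand d E M r v ≤ (d + 1) * c v := by
  have hd1 := natCast_sub_one_pos hd
  have hDv : 0 < demand d E M r v :=
    pos_of_mul_pos_right ((mul_nonneg d.cast_nonneg (hc v)).trans_lt hjoin) hd1.le
  have hcvD : c v ≤ demand d E M r v := by nlinarith [hc v]
  set r' := Function.update r v (joinRansom d E c M r v)
  have hval' : ValidProfile E c (insert v M) r' :=
    hnash.1.insert_update (joinRansom_nonneg hd hnash.1 (hc v) hDv.le)
      (fun _ => joinRansom_of_notMem) (sum_joinRansom hd hDv.ne')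
  have hdev : Deviation v M (insert v M) r r' := deviation_insert_update _
  have hle := hnash.2 v _ _ hval' hdev
  rw [utility_of_mem_s14 (mem_insert_self v M), utility_of_notMem hv, hdev.demand_eq,
    min_eq_right hcvD] at hle
  have hpen : (0 : ℝ) ≤ if ∃ S ∈ E, v ∈ S ∧ M ∩ S = ∅ then T else 0 := by
    split_ifs
    exacts [hT, le_rfl]
  have hd0 : (0 : ℝ) < d := by linarith
  have hincome : ((d : ℝ) - 1) / d * c v ≤ ransomIncome d E c (insert v M) r' v := by
    refine mul_cost_le_ransomIncome hd hunif hval' (mem_insert_self v M)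
      fun S _ _ _ u hu => le_shareWeight ?_ (hc u) fun huM _ => ?_
    · rw [div_le_one hd0]; linarith
    · have huv := ne_of_mem_erase hu
      have hu : u ∈ M := (mem_insert.1 huM).resolve_left huv
      have := sub_one_mul_demand_join_le hd hc hnash.1 hv hu huv
        (demand_le_cost_of_mem hd hunif hc hnash hu) hDv hjoin.le
      rw [div_mul_eq_mul_div, div_le_iff₀ hd0]
      linarith
  have hscale : (d : ℝ) * (((d : ℝ) - 1) / d * c v) = ((d : ℝ) - 1) * c v := by field_simp
  nlinarith [mul_le_mul_of_nonneg_left hincome hd0.le]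

end

variable {V : Type*} [Fintype V] [DecidableEq V]

/-- in any pure Nash equilibrium `(M, r)` of the Mafia Hitting Set Game, every
civilian `v` satisfies `D v ≤ (d/(d-1))·c v`. -/
theorem stmt_14 (d : ℕ) (hd : 2 ≤ d) (E : Finset (Finset V))
    (hunif : ∀ S ∈ E, S.card = d)
    (c : V → ℝ) (hc : ∀ v, 0 ≤ c v) (T : ℝ) (hT : 2 * ∑ v, c v < T)
    (M : Finset V) (r : V → Finset V → ℝ)
    (hnash : IsNashEq d E c T M r)
    (v : V) (hv : v ∉ M) :
    demand d E M r v ≤ ((d : ℝ) / ((d : ℝ) - 1)) * c v := by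
  have hT0 : 0 ≤ T := by linarith [sum_nonneg fun u (_ : u ∈ univ) => hc u]
  have hd1 := natCast_sub_one_pos hd
  by_contra! hcon
  have hjoin : d * c v < ((d : ℝ) - 1) * demand d E M r v := by
    rw [div_mul_eq_mul_div, div_lt_iff₀ hd1] at hcon
    linarith
  have hle := mul_demand_le_of_notMem hd hunif hc hT0 hnash hv hjoin
  nlinarith [mul_le_mul_of_nonneg_left hle hd1.le, hc v]

end MafiaHS
end
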